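/- arXiv:2602.13014 — 7 statements merged into one kernel-verified Lean document; each statement's English description precedes it below -/
import Mathlib

section
/- An allocation q solves the monopolist problem 𝒫^M if and only if q solves the cap-constrained problem 𝒫(q^M) for a quality q^M that maximizes q̂ ↦ V(q̂) − c(q̂) over q̂ ≥ 0, where V(q̂) denotes the value of 𝒫(q̂). -/
open MeasureTheory Set Filter Topology

noncomputable section

/-- The virtual value `φ(θ) = θ - (1 - F(θ))/F'(θ)`. -/
def phi (F : ℝ → ℝ) (θ : ℝ) : ℝ := θ - (1 - F θ) / deriv F θ

/-- Standing hypotheses of the main model. -/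
structure MainModel (F g c : ℝ → ℝ) : Prop where
  F_smooth : ContDiff ℝ 2 F
  F_zero : F 0 = 0
  F_one : F 1 = 1
  F_mono : Monotone F
  F_density_pos : ∀ θ ∈ Icc (0:ℝ) 1, 0 < deriv F θ
  phi_mono : StrictMonoOn (phi F) (Icc (0:ℝ) 1)
  g_zero : g 0 = 0
  g_mono : StrictMonoOn g (Ici (0:ℝ))
  g_concave : StrictConcaveOn ℝ (Ici (0:ℝ)) g
  g_diff : ∀ q ∈ Ioi (0:ℝ), DifferentiableAt ℝ g q
  g_diff2 : ∀ q ∈ Ioi (0:ℝ), DifferentiableAt ℝ (deriv g) q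
  c_nonneg : ∀ q : ℝ, 0 ≤ c q
  c_mono : StrictMonoOn c (Ici (0:ℝ))
  c_convex : StrictConvexOn ℝ (Ici (0:ℝ)) c
  c_diff : ∀ q ∈ Ici (0:ℝ), DifferentiableAt ℝ c q
  inada_gtop : Tendsto (deriv g) atTop (nhds 0)
  inada_czero : deriv c 0 = 0
  inada_ctop : Tendsto (deriv c) atTop atTop
  inada_gzero : Tendsto (deriv g) (nhdsWithin 0 (Ioi 0)) atTop

/-- An allocation: a measurable map from types to (nonnegative) qualities. -/
def IsAllocation (q : ℝ → ℝ) : Prop :=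
  Measurable q ∧ ∀ θ ∈ Icc (0:ℝ) 1, 0 ≤ q θ

/-- Total welfare of an allocation. -/
def totalWelfare (F g c : ℝ → ℝ) (q : ℝ → ℝ) : ℝ :=
  (∫ θ in (0:ℝ)..1, (g (q θ) + θ * q θ) * deriv F θ) - c (sSup (q '' Icc (0:ℝ) 1))

/-- Efficiency: maximize total welfare among allocations. -/
def Efficient (F g c : ℝ → ℝ) (q : ℝ → ℝ) : Prop :=
  IsAllocation q ∧
    ∀ q' : ℝ → ℝ, IsAllocation q' → totalWelfare F g c q' ≤ totalWelfare F g c q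

/-- Incentive compatibility and individual rationality of a direct mechanism. -/
def ICIR (g : ℝ → ℝ) (q t : ℝ → ℝ) : Prop :=
  ∀ θ ∈ Icc (0:ℝ) 1,
    (∀ θ' ∈ Icc (0:ℝ) 1, g (q θ') + θ * q θ' - t θ' ≤ g (q θ) + θ * q θ - t θ) ∧
      0 ≤ g (q θ) + θ * q θ - t θ

/-- The profit of the seller from a mechanism. -/
def profit (F c : ℝ → ℝ) (q t : ℝ → ℝ) : ℝ :=
  (∫ θ in (0:ℝ)..1, t θ * deriv F θ) - c (sSup (q '' Icc (0:ℝ) 1))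

/-- A monopolist allocation: part of a profit-maximizing IC-IR mechanism. -/
def Monopolist (F g c : ℝ → ℝ) (q : ℝ → ℝ) : Prop :=
  ∃ t : ℝ → ℝ, IsAllocation q ∧ ICIR g q t ∧
    ∀ q' t' : ℝ → ℝ, IsAllocation q' → ICIR g q' t' →
      profit F c q' t' ≤ profit F c q t

/-- The virtual surplus of an allocation. -/
def virtSurplus (F g : ℝ → ℝ) (q : ℝ → ℝ) : ℝ :=
  ∫ θ in (0:ℝ)..1, (g (q θ) + phi F θ * q θ) * deriv F θ

/-- Feasibility in the cap-constrained problem `𝒫(qcap)`. -/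
def FeasibleCap (qcap : ℝ) (q : ℝ → ℝ) : Prop :=
  IsAllocation q ∧ MonotoneOn q (Icc (0:ℝ) 1) ∧ ∀ θ ∈ Icc (0:ℝ) 1, q θ ≤ qcap

/-- The value `V(qcap)` of the cap-constrained problem `𝒫(qcap)`. -/
def Vval (F g : ℝ → ℝ) (qcap : ℝ) : ℝ :=
  sSup {v | ∃ q : ℝ → ℝ, FeasibleCap qcap q ∧ v = virtSurplus F g q}

/-- Solving the cap-constrained problem `𝒫(qcap)`. -/
def SolvesCap (F g : ℝ → ℝ) (qcap : ℝ) (q : ℝ → ℝ) : Prop :=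
  FeasibleCap qcap q ∧
    ∀ q' : ℝ → ℝ, FeasibleCap qcap q' → virtSurplus F g q' ≤ virtSurplus F g q

/-- The virtual-surplus maximizer `β`, taking the value `⊤` where `φ(θ) ≥ 0`. -/
def IsVSMax (F g : ℝ → ℝ) (βe : ℝ → EReal) : Prop :=
  ∀ θ ∈ Icc (0:ℝ) 1,
    (0 ≤ phi F θ → βe θ = ⊤) ∧
    (phi F θ < 0 → ∃ qb : ℝ, βe θ = (qb : EReal) ∧ 0 ≤ qb ∧
      ∀ q' : ℝ, 0 ≤ q' → g q' + phi F θ * q' ≤ g qb + phi F θ * qb)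

/-- The generalized inverse `b` of the virtual-surplus maximizer. -/
def bfun (βe : ℝ → EReal) (q : ℝ) : ℝ :=
  sInf {θ ∈ Icc (0:ℝ) 1 | (q : EReal) ≤ βe θ}

/-!
Incentive compatibility says that the buyer's utility `U` has subgradient `q`, so `q` is
nondecreasing and `U θ = U 0 + ∫₀^θ q` (the envelope formula). Integrating the transfers against
`F'` and integrating by parts turns expected revenue into virtual surplus minus `U 0 ≥ 0`, and
every nondecreasing allocation is implemented with `U 0 = 0`. So the monopolist maximizes
`virtSurplus q - c (q 1)` over nondecreasing allocations, and splitting this maximization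
according to the top quality `q 1 ≤ q̂` yields the inner problem `𝒫(q̂)` and the outer problem
`max (V q̂ - c q̂)`.
-/

theorem eq_of_abs_sub_le_sub_mul_sub {h Q : ℝ → ℝ} {a b : ℝ} (hab : a ≤ b)
    (hh : ∀ x ∈ Icc a b, ∀ y ∈ Icc a b, x ≤ y → |h y - h x| ≤ (Q y - Q x) * (y - x)) :
    h b = h a := by
  -- Telescoping over the uniform partition of `[a, b]` into `n` pieces gives a bound `C / n`.
  have hbound : ∀ n : ℕ, 0 < n → |h b - h a| ≤ (Q b - Q a) * (b - a) / n := by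
    intro n hn
    have hn' : (0 : ℝ) < n := Nat.cast_pos.mpr hn
    set δ := (b - a) / n
    have hδ : 0 ≤ δ := div_nonneg (sub_nonneg.mpr hab) hn'.le
    set x : ℕ → ℝ := fun i => a + i * δ with hx
    have hx0 : x 0 = a := by simp [hx]
    have hxn : x n = b := by simp only [hx, δ]; field_simp; ring
    have hxmem : ∀ i ≤ n, x i ∈ Icc a b := fun i hi => by
      refine ⟨le_add_of_nonneg_right (by positivity), hxn ▸ ?_⟩
      simp only [hx]; gcongr
    have hstep : ∀ i, x (i + 1) - x i = δ := fun i => by simp only [hx]; push_cast; ring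
    calc |h b - h a| = |∑ i ∈ Finset.range n, (h (x (i + 1)) - h (x i))| := by
          rw [Finset.sum_range_sub (fun i => h (x i)), hxn, hx0]
      _ ≤ ∑ i ∈ Finset.range n, (Q (x (i + 1)) - Q (x i)) * δ := by
          refine (Finset.abs_sum_le_sum_abs _ _).trans (Finset.sum_le_sum fun i hi => ?_)
          have hi := Finset.mem_range.mp hi
          simpa only [hstep] using hh _ (hxmem i hi.le) _ (hxmem (i + 1) hi)
            (sub_nonneg.mp ((hstep i).symm ▸ hδ))
      _ = (Q b - Q a) * (b - a) / n := by
          rw [← Finset.sum_mul, Finset.sum_range_sub (fun i => Q (x i)), hxn, hx0, mul_div_assoc]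
  have hlim := tendsto_const_div_atTop_nhds_zero_nat ((Q b - Q a) * (b - a))
  have hle : |h b - h a| ≤ 0 :=
    ge_of_tendsto hlim (eventually_atTop.2 ⟨1, fun n hn => hbound n hn⟩)
  exact sub_eq_zero.mp (abs_nonpos_iff.mp hle)

theorem MonotoneOn.sub_mul_le_intervalIntegral {q : ℝ → ℝ} {x y : ℝ}
    (hq : MonotoneOn q (uIcc x y)) : (y - x) * q x ≤ ∫ s in x..y, q s := by
  rcases le_total x y with hxy | hyx
  · have := intervalIntegral.integral_mono_on hxy (intervalIntegrable_const (μ := volume))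
      hq.intervalIntegrable
      fun s hs => hq left_mem_uIcc (uIcc_of_le hxy ▸ hs) hs.1
    simpa using this
  · have := intervalIntegral.integral_mono_on hyx hq.intervalIntegrable.symm
      (intervalIntegrable_const (μ := volume))
      fun s hs => hq (uIcc_of_ge hyx ▸ hs) left_mem_uIcc hs.2
    rw [intervalIntegral.integral_symm]
    simp only [intervalIntegral.integral_const, smul_eq_mul] at this
    linarith

section Subgradient

variable {U q : ℝ → ℝ} {a b : ℝ}

theorem monotoneOn_of_subgradient
    (hU : ∀ x ∈ Icc a b, ∀ y ∈ Icc a b, U x + (y - x) * q x ≤ U y) : MonotoneOn q (Icc a b) := by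
  intro x hx y hy hxy
  rcases hxy.eq_or_lt with rfl | hlt
  · rfl
  · have h := add_le_add (hU x hx y hy) (hU y hy x hx)
    nlinarith

theorem eq_add_integral_of_subgradient
    (hU : ∀ x ∈ Icc a b, ∀ y ∈ Icc a b, U x + (y - x) * q x ≤ U y) {θ : ℝ} (hθ : θ ∈ Icc a b) :
    U θ = U a + ∫ s in a..θ, q s := by
  have hq := monotoneOn_of_subgradient hU
  have hsub : Icc a θ ⊆ Icc a b := Icc_subset_Icc_right hθ.2
  suffices U θ - (∫ s in a..θ, q s) = U a - ∫ s in a..a, q s by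
    rw [intervalIntegral.integral_same] at this; linarith
  refine eq_of_abs_sub_le_sub_mul_sub (h := fun x => U x - ∫ s in a..x, q s) (Q := q) hθ.1
    fun x hx y hy hxy => ?_
  have hx' := hsub hx
  have hy' := hsub hy
  have hint : ∀ {u v}, u ∈ Icc a b → v ∈ Icc a b → IntervalIntegrable q volume u v :=
    fun hu hv => (hq.mono (uIcc_subset_Icc hu hv)).intervalIntegrable
  -- Both `U y - U x` and `∫ s in x..y, q s` lie between `(y - x) * q x` and `(y - x) * q y`.
  have hlow := (hq.mono (uIcc_subset_Icc hx' hy')).sub_mul_le_intervalIntegral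
  have hupp := (hq.mono (uIcc_subset_Icc hy' hx')).sub_mul_le_intervalIntegral
  rw [intervalIntegral.integral_symm] at hupp
  have ha : a ∈ Icc a b := left_mem_Icc.mpr (hθ.1.trans hθ.2)
  rw [← intervalIntegral.integral_add_adjacent_intervals (hint ha hx') (hint hx' hy'), abs_le]
  have := hU x hx' y hy'
  have := hU y hy' x hx'
  constructor <;> linarith

end Subgradient

theorem integral_primitive_mul_deriv {Q G : ℝ → ℝ} {a b : ℝ}
    (hQ : IntervalIntegrable Q volume a b) (hG : AbsolutelyContinuousOnInterval G a b) :
    ∫ θ in a..b, (∫ s in a..θ, Q s) * deriv G θ = ∫ s in a..b, Q s * (G b - G s) := by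
  have hP := hQ.absolutelyContinuousOnInterval_intervalIntegral left_mem_uIcc
  have hderiv :
      ∫ θ in a..b, deriv (fun x => ∫ s in a..x, Q s) θ * G θ = ∫ θ in a..b, Q θ * G θ := by
    refine intervalIntegral.integral_congr_ae ?_
    filter_upwards [hQ.ae_hasDerivAt_integral] with x hx hxab
    rw [(hx (uIoc_subset_uIcc hxab) a left_mem_uIcc).deriv]
  have hQG : IntervalIntegrable (fun s => Q s * G s) volume a b :=
    hQ.mul_continuousOn hG.continuousOn
  rw [hP.integral_mul_deriv_eq_deriv_mul hG, hderiv, intervalIntegral.integral_same, zero_mul,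
    sub_zero, ← intervalIntegral.integral_mul_const, ← intervalIntegral.integral_sub
      (hQ.mul_const _) hQG]
  simp only [mul_sub]

theorem MonotoneOn.csSup_image_Icc {α β : Type*} [Preorder α] [ConditionallyCompleteLattice β]
    {f : α → β} {a b : α} (hab : a ≤ b)
    (hf : MonotoneOn f (Icc a b)) : sSup (f '' Icc a b) = f b :=
  IsGreatest.csSup_eq ⟨mem_image_of_mem f (right_mem_Icc.mpr hab),
    by rintro _ ⟨x, hx, rfl⟩; exact hf hx (right_mem_Icc.mpr hab) hx.2⟩

section Optimization

variable {α : Type*} {S : α → Prop} {P : ℝ → α → Prop} {J m : α → ℝ} {c : ℝ → ℝ}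

theorem forall_sub_le_iff_exists_cap (hP : ∀ k x, P k x ↔ S x ∧ m x ≤ k)
    (hm : ∀ x, S x → 0 ≤ m x) (hc : MonotoneOn c (Ici 0)) (hne : ∀ k, 0 ≤ k → ∃ x, P k x)
    (hbdd : ∀ k, 0 ≤ k → BddAbove {v | ∃ x, P k x ∧ v = J x}) (x : α) :
    (S x ∧ ∀ y, S y → J y - c (m y) ≤ J x - c (m x)) ↔
      ∃ k, 0 ≤ k ∧
        (∀ k', 0 ≤ k' → sSup {v | ∃ y, P k' y ∧ v = J y} - c k' ≤
          sSup {v | ∃ y, P k y ∧ v = J y} - c k) ∧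
        (P k x ∧ ∀ y, P k y → J y ≤ J x) := by
  have le_value : ∀ {k y}, 0 ≤ k → P k y → J y ≤ sSup {v | ∃ y, P k y ∧ v = J y} :=
    fun hk hy => le_csSup (hbdd _ hk) ⟨_, hy, rfl⟩
  constructor
  · rintro ⟨hx, hmax⟩
    have hmx := hm x hx
    have hxP : P (m x) x := (hP _ _).mpr ⟨hx, le_rfl⟩
    refine ⟨m x, hmx, fun k' hk' => ?_, hxP, fun y hy => ?_⟩
    · have hV : sSup {v | ∃ y, P k' y ∧ v = J y} ≤ J x - c (m x) + c k' := by
        obtain ⟨y₀, hy₀⟩ := hne k' hk'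
        refine csSup_le ⟨_, y₀, hy₀, rfl⟩ ?_
        rintro _ ⟨y, hy, rfl⟩
        obtain ⟨hSy, hyk⟩ := (hP _ _).mp hy
        have := hc (hm y hSy) hk' hyk
        linarith [hmax y hSy]
      linarith [le_value hmx hxP]
    · obtain ⟨hSy, hyk⟩ := (hP _ _).mp hy
      have := hc (hm y hSy) hmx hyk
      linarith [hmax y hSy]
  · rintro ⟨k, hk, hkmax, hxP, hxmax⟩
    obtain ⟨hx, hxk⟩ := (hP _ _).mp hxP
    have hVk : sSup {v | ∃ y, P k y ∧ v = J y} = J x :=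
      le_antisymm (csSup_le ⟨_, x, hxP, rfl⟩ (by rintro _ ⟨y, hy, rfl⟩; exact hxmax y hy))
        (le_value hk hxP)
    refine ⟨hx, fun y hy => ?_⟩
    have hmy := hm y hy
    have hyP : P (m y) y := (hP _ _).mpr ⟨hy, le_rfl⟩
    have := hc (hm x hx) hk hxk
    linarith [le_value hmy hyP, hkmax _ hmy]

end Optimization

def utility (g q t : ℝ → ℝ) (θ : ℝ) : ℝ := g (q θ) + θ * q θ - t θ

def envelopeTransfer (g q : ℝ → ℝ) (θ : ℝ) : ℝ := g (q θ) + θ * q θ - ∫ s in (0:ℝ)..θ, q s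

section Mechanism

variable {g q t : ℝ → ℝ}

theorem ICIR.subgradient (hic : ICIR g q t) :
    ∀ x ∈ Icc (0:ℝ) 1, ∀ y ∈ Icc (0:ℝ) 1, utility g q t x + (y - x) * q x ≤ utility g q t y :=
  fun x hx y hy => by have := (hic y hy).1 x hx; unfold utility; linarith

theorem ICIR.monotoneOn (hic : ICIR g q t) : MonotoneOn q (Icc 0 1) :=
  monotoneOn_of_subgradient hic.subgradient

theorem ICIR.eq_envelopeTransfer_sub (hic : ICIR g q t) {θ : ℝ} (hθ : θ ∈ Icc (0:ℝ) 1) :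
    t θ = envelopeTransfer g q θ - utility g q t 0 := by
  have := eq_add_integral_of_subgradient hic.subgradient hθ
  unfold utility at this
  unfold envelopeTransfer utility
  linarith

theorem icir_envelopeTransfer (hq : MonotoneOn q (Icc 0 1)) (hq0 : ∀ θ ∈ Icc (0:ℝ) 1, 0 ≤ q θ) :
    ICIR g q (envelopeTransfer g q) := by
  have hint : ∀ {u v}, u ∈ Icc (0:ℝ) 1 → v ∈ Icc (0:ℝ) 1 → IntervalIntegrable q volume u v :=
    fun hu hv => (hq.mono (uIcc_subset_Icc hu hv)).intervalIntegrable
  have h0 : (0:ℝ) ∈ Icc (0:ℝ) 1 := left_mem_Icc.mpr zero_le_one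
  intro θ hθ
  refine ⟨fun θ' hθ' => ?_, ?_⟩
  · have := (hq.mono (uIcc_subset_Icc hθ' hθ)).sub_mul_le_intervalIntegral
    have := intervalIntegral.integral_add_adjacent_intervals (hint h0 hθ') (hint hθ' hθ)
    unfold envelopeTransfer
    linarith
  · unfold envelopeTransfer
    simpa using intervalIntegral.integral_nonneg hθ.1 fun s hs => hq0 s ⟨hs.1, hs.2.trans hθ.2⟩

end Mechanism

section VirtualSurplus

variable {F g q t : ℝ → ℝ}

theorem phi_mul_deriv {θ : ℝ} (h : deriv F θ ≠ 0) :
    phi F θ * deriv F θ = θ * deriv F θ - (1 - F θ) := by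
  unfold phi; field_simp

theorem phi_le_self {θ : ℝ} (hF : F θ ≤ 1) (h : 0 ≤ deriv F θ) : phi F θ ≤ θ :=
  sub_le_self _ (div_nonneg (sub_nonneg.mpr hF) h)

theorem continuousOn_phi (hF : ContDiff ℝ 1 F) (hF' : ∀ θ ∈ Icc (0:ℝ) 1, 0 < deriv F θ) :
    ContinuousOn (phi F) (Icc 0 1) :=
  continuousOn_id.sub ((continuous_const.sub hF.continuous).continuousOn.div
    (hF.continuous_deriv le_rfl).continuousOn fun θ hθ => (hF' θ hθ).ne')

theorem integral_deriv_eq_one (hF : ContDiff ℝ 1 F) (hF0 : F 0 = 0) (hF1 : F 1 = 1) :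
    ∫ θ in (0:ℝ)..1, deriv F θ = 1 := by
  rw [intervalIntegral.integral_deriv_eq_sub (fun x _ => hF.differentiable one_ne_zero x)
    ((hF.continuous_deriv le_rfl).intervalIntegrable 0 1), hF0, hF1, sub_zero]

theorem intervalIntegrable_virtSurplus (hF : ContDiff ℝ 1 F)
    (hF' : ∀ θ ∈ Icc (0:ℝ) 1, 0 < deriv F θ) (hg : MonotoneOn g (Ici 0))
    (hq : MonotoneOn q (Icc 0 1)) (hq0 : ∀ θ ∈ Icc (0:ℝ) 1, 0 ≤ q θ) :
    IntervalIntegrable (fun θ => (g (q θ) + phi F θ * q θ) * deriv F θ) volume 0 1 := by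
  have hgq : MonotoneOn (fun θ => g (q θ)) (Icc 0 1) :=
    fun x hx y hy hxy => hg (hq0 x hx) (hq0 y hy) (hq hx hy hxy)
  rw [← uIcc_of_le zero_le_one] at hq hgq
  exact (hgq.intervalIntegrable.add (hq.intervalIntegrable.continuousOn_mul
    (uIcc_of_le (zero_le_one' ℝ) ▸ continuousOn_phi hF hF'))).mul_continuousOn
    (hF.continuous_deriv le_rfl).continuousOn

theorem ICIR.integral_mul_deriv (hF : ContDiff ℝ 1 F) (hF0 : F 0 = 0) (hF1 : F 1 = 1)
    (hF' : ∀ θ ∈ Icc (0:ℝ) 1, 0 < deriv F θ) (hg : MonotoneOn g (Ici 0))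
    (hq0 : ∀ θ ∈ Icc (0:ℝ) 1, 0 ≤ q θ) (hic : ICIR g q t) :
    ∫ θ in (0:ℝ)..1, t θ * deriv F θ = virtSurplus F g q - utility g q t 0 := by
  have hq := hic.monotoneOn
  have hqi : IntervalIntegrable q volume 0 1 :=
    (uIcc_of_le (zero_le_one' ℝ) ▸ hq).intervalIntegrable
  have hFc : Continuous (deriv F) := hF.continuous_deriv le_rfl
  have hFac : AbsolutelyContinuousOnInterval F 0 1 := hF.contDiffOn.absolutelyContinuousOnInterval
  have hsplit : EqOn (fun θ => t θ * deriv F θ)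
      (fun θ => (g (q θ) + phi F θ * q θ) * deriv F θ + q θ * (F 1 - F θ)
        - (∫ s in (0:ℝ)..θ, q s) * deriv F θ - utility g q t 0 * deriv F θ) (uIcc 0 1) := by
    intro θ hθ
    rw [uIcc_of_le zero_le_one] at hθ
    have := phi_mul_deriv (hF' θ hθ).ne'
    simp only [hic.eq_envelopeTransfer_sub hθ, envelopeTransfer, hF1]
    linear_combination (-q θ) * this
  have hvs := intervalIntegrable_virtSurplus hF hF' hg hq hq0
  have hrent : IntervalIntegrable (fun θ => q θ * (F 1 - F θ)) volume 0 1 :=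
    hqi.mul_continuousOn (continuousOn_const.sub hFac.continuousOn)
  have hprim : IntervalIntegrable (fun θ => (∫ s in (0:ℝ)..θ, q s) * deriv F θ) volume 0 1 :=
    ((hqi.absolutelyContinuousOnInterval_intervalIntegral left_mem_uIcc).continuousOn.mul
      hFc.continuousOn).intervalIntegrable
  rw [intervalIntegral.integral_congr hsplit,
    intervalIntegral.integral_sub ((hvs.add hrent).sub hprim)
      ((hFc.intervalIntegrable 0 1).const_mul _),
    intervalIntegral.integral_sub (hvs.add hrent) hprim, intervalIntegral.integral_add hvs hrent,
    integral_primitive_mul_deriv hqi hFac, intervalIntegral.integral_const_mul,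
    integral_deriv_eq_one hF hF0 hF1, virtSurplus]
  ring

theorem virtSurplus_le {k : ℝ} (hF : ContDiff ℝ 1 F) (hF0 : F 0 = 0)
    (hF1 : F 1 = 1) (hFm : Monotone F) (hF' : ∀ θ ∈ Icc (0:ℝ) 1, 0 < deriv F θ)
    (hg : MonotoneOn g (Ici 0)) (hq : FeasibleCap k q) : virtSurplus F g q ≤ g k + k := by
  obtain ⟨⟨-, hq0⟩, hqm, hqk⟩ := hq
  have hFc : Continuous (deriv F) := hF.continuous_deriv le_rfl
  calc virtSurplus F g q ≤ ∫ θ in (0:ℝ)..1, (g k + k) * deriv F θ := by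
        refine intervalIntegral.integral_mono_on zero_le_one
          (intervalIntegrable_virtSurplus hF hF' hg hqm hq0)
          ((hFc.intervalIntegrable 0 1).const_mul _) fun θ hθ => ?_
        have hk : 0 ≤ k := (hq0 θ hθ).trans (hqk θ hθ)
        have hφ : phi F θ ≤ 1 := (phi_le_self (hF1 ▸ hFm hθ.2) (hF' θ hθ).le).trans hθ.2
        gcongr
        · exact (hF' θ hθ).le
        · exact hg (hq0 θ hθ) hk (hqk θ hθ)
        · exact (mul_le_of_le_one_left (hq0 θ hθ) hφ).trans (hqk θ hθ)
    _ = g k + k := by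
        rw [intervalIntegral.integral_const_mul, integral_deriv_eq_one hF hF0 hF1, mul_one]

end VirtualSurplus

theorem feasibleCap_iff {k : ℝ} {q : ℝ → ℝ} :
    FeasibleCap k q ↔ (IsAllocation q ∧ MonotoneOn q (Icc 0 1)) ∧ q 1 ≤ k := by
  have h1 : (1:ℝ) ∈ Icc (0:ℝ) 1 := right_mem_Icc.mpr zero_le_one
  exact ⟨fun ⟨ha, hm, hk⟩ => ⟨⟨ha, hm⟩, hk 1 h1⟩,
    fun ⟨⟨ha, hm⟩, hk⟩ => ⟨ha, hm, fun θ hθ => (hm hθ h1 hθ.2).trans hk⟩⟩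

section Monopolist

variable {F g c q t : ℝ → ℝ}

theorem MainModel.profit_eq (hM : MainModel F g c) (ha : IsAllocation q) (hic : ICIR g q t) :
    profit F c q t = virtSurplus F g q - utility g q t 0 - c (q 1) := by
  rw [profit, hic.integral_mul_deriv (hM.F_smooth.of_le one_le_two) hM.F_zero hM.F_one
    hM.F_density_pos hM.g_mono.monotoneOn ha.2, hic.monotoneOn.csSup_image_Icc zero_le_one]

theorem MainModel.monopolist_iff (hM : MainModel F g c) :
    Monopolist F g c q ↔ (IsAllocation q ∧ MonotoneOn q (Icc 0 1)) ∧
      ∀ q', IsAllocation q' ∧ MonotoneOn q' (Icc 0 1) →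
        virtSurplus F g q' - c (q' 1) ≤ virtSurplus F g q - c (q 1) := by
  have h0 : (0:ℝ) ∈ Icc (0:ℝ) 1 := left_mem_Icc.mpr zero_le_one
  have envelope_profit : ∀ {q}, IsAllocation q → MonotoneOn q (Icc 0 1) →
      ICIR g q (envelopeTransfer g q) ∧
        profit F c q (envelopeTransfer g q) = virtSurplus F g q - c (q 1) := fun ha hm => by
    have hic := icir_envelopeTransfer (g := g) hm ha.2
    refine ⟨hic, ?_⟩
    simp [hM.profit_eq ha hic, utility, envelopeTransfer]
  constructor
  · rintro ⟨t, ha, hic, hopt⟩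
    refine ⟨⟨ha, hic.monotoneOn⟩, fun q' ⟨ha', hm'⟩ => ?_⟩
    obtain ⟨hic', hprofit'⟩ := envelope_profit ha' hm'
    have := hopt q' _ ha' hic'
    have hU : 0 ≤ utility g q t 0 := (hic 0 h0).2
    linarith [hM.profit_eq ha hic]
  · rintro ⟨⟨ha, hm⟩, hmax⟩
    obtain ⟨hic, hprofit⟩ := envelope_profit ha hm
    refine ⟨_, ha, hic, fun q' t' ha' hic' => ?_⟩
    have := hmax q' ⟨ha', hic'.monotoneOn⟩
    have hU : 0 ≤ utility g q' t' 0 := (hic' 0 h0).2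
    linarith [hM.profit_eq ha' hic']

end Monopolist

/-- Lemma 1: decomposition. An allocation solves the monopolist
problem `𝒫^M` iff it solves the cap-constrained problem `𝒫(q^M)` for a quality `q^M`
maximizing `q̂ ↦ V(q̂) - c(q̂)` over `q̂ ≥ 0`. -/
theorem stmt1 (F g c : ℝ → ℝ) (hM : MainModel F g c) (q : ℝ → ℝ) :
    Monopolist F g c q ↔
      ∃ qM : ℝ, 0 ≤ qM ∧
        (∀ qhat : ℝ, 0 ≤ qhat → Vval F g qhat - c qhat ≤ Vval F g qM - c qM) ∧
        SolvesCap F g qM q := by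
  rw [hM.monopolist_iff]
  refine forall_sub_le_iff_exists_cap (J := virtSurplus F g) (m := fun q => q 1)
    (P := FeasibleCap) (fun _ _ => feasibleCap_iff)
    (fun q hq => hq.1.2 1 (right_mem_Icc.mpr zero_le_one)) hM.c_mono.monotoneOn
    (fun k hk => ⟨fun _ => 0, ⟨measurable_const, fun _ _ => le_rfl⟩, fun _ _ _ _ _ => le_rfl,
      fun _ _ => hk⟩)
    (fun k hk => ⟨g k + k, ?_⟩) q
  rintro _ ⟨q', hq', rfl⟩
  exact virtSurplus_le (hM.F_smooth.of_le one_le_two) hM.F_zero hM.F_one hM.F_mono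
    hM.F_density_pos hM.g_mono.monotoneOn hq'
end
end

section
/- Suppose the monopolist does not fully bunch, i.e. b(q^M) > 0. Then the non-discriminating monopolist's optimal quality satisfies q_N^M < q^M, and the cutoff type satisfies b_N(q_N^M) < b(q^M). -/
open MeasureTheory Set Filter Topology

noncomputable section

/-- The cutoff type of the non-discriminating monopolist. -/
def bN (F g : ℝ → ℝ) (q : ℝ) : ℝ :=
  sInf {θ ∈ Icc (0:ℝ) 1 | 0 ≤ g q + phi F θ * q}

/-- The revenue of the non-discriminating monopolist from quality `q`. -/
def VN (F g : ℝ → ℝ) (q : ℝ) : ℝ :=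
  sSup {v | ∃ θ ∈ Icc (0:ℝ) 1, v = (1 - F θ) * (g q + θ * q)}

/-!
Everything is read off the virtual value `φ`. Below `b(q)` one has `φ < -g'(q)` and above it
`φ ≥ -g'(q)`, while `θ ↦ (1 - F θ)(a + θ b)` has derivative `-(a + b φ(θ)) F'(θ)`.

If `q_N^M = q^M`, the two first-order conditions would give equal values of `(1 - F θ)(g'(q) + θ)`
at `b_N(q) < b(q)`, where this function is strictly increasing. If `q_N^M > q^M`, let `θ_N` be the
optimal cutoff of the non-discriminating seller at `q_N^M` and `s = max θ_N b(q^M)`. Raising to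
`q_N^M` the quality of every type above `s` in an allocation feasible for the cap `q^M` increases
the virtual surplus by at least `(1 - F s)(Δg + s Δq)`, which dominates the gain
`VN(q_N^M) - VN(q^M)`; so `V - c` would be larger at `q_N^M` than at `q^M`. Finally,
`φ(b_N(q)) < -g'(q) ≤ -g'(q^M)` for `0 < q ≤ q^M` puts `b_N(q_N^M)` below `b(q^M)`.
-/

/-- Revenue from the types above `θ` at the price `a + θ b`, which leaves type `θ` indifferent. -/
def cutoffRevenue (F : ℝ → ℝ) (a b θ : ℝ) : ℝ := (1 - F θ) * (a + θ * b)

theorem StrictConcaveOn.deriv_mul_sub_lt_sub {S : Set ℝ} {f : ℝ → ℝ} {x y : ℝ}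
    (hf : StrictConcaveOn ℝ S f) (hx : x ∈ S) (hy : y ∈ S) (hxy : x < y)
    (hfd : DifferentiableAt ℝ f y) : deriv f y * (y - x) < f y - f x := by
  have h := hf.deriv_lt_slope hx hy hxy hfd
  rwa [slope_def_field, lt_div_iff₀ (sub_pos.mpr hxy)] at h

theorem ConcaveOn.sub_le_deriv_mul_sub {S : Set ℝ} {f : ℝ → ℝ} {x y : ℝ}
    (hf : ConcaveOn ℝ S f) (hx : x ∈ S) (hy : y ∈ S) (hxy : x < y)
    (hfd : DifferentiableAt ℝ f x) : f y - f x ≤ deriv f x * (y - x) := by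
  have h := hf.slope_le_deriv hx hy hxy hfd
  rwa [slope_def_field, div_le_iff₀ (sub_pos.mpr hxy)] at h

theorem le_of_maximizes_add_mul {g : ℝ → ℝ} {p p' x x' : ℝ} (hp : p < p')
    (hx : g x' + p * x' ≤ g x + p * x) (hx' : g x + p' * x ≤ g x' + p' * x') : x ≤ x' := by
  by_contra h
  nlinarith [mul_pos (sub_pos.mpr hp) (sub_pos.mpr (not_le.mp h))]

section FirstInIcc

variable {P : ℝ → Prop}

theorem csInf_sep_Icc_mem_Icc (h1 : P 1) : sInf {θ ∈ Icc (0:ℝ) 1 | P θ} ∈ Icc (0:ℝ) 1 :=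
  ⟨le_csInf ⟨1, ⟨zero_le_one, le_rfl⟩, h1⟩ fun _ hθ => hθ.1.1,
    csInf_le ⟨0, fun _ hθ => hθ.1.1⟩ ⟨⟨zero_le_one, le_rfl⟩, h1⟩⟩

theorem csInf_sep_Icc_eq_zero (h : ∀ θ ∈ Icc (0:ℝ) 1, P θ) :
    sInf {θ ∈ Icc (0:ℝ) 1 | P θ} = 0 := by
  rw [sep_eq_self_iff_mem_true.mpr h, csInf_Icc zero_le_one]

theorem not_of_lt_csInf_sep_Icc {θ : ℝ} (hθ : θ ∈ Icc (0:ℝ) 1)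
    (hlt : θ < sInf {θ ∈ Icc (0:ℝ) 1 | P θ}) : ¬ P θ :=
  fun hP => (csInf_le (s := {θ ∈ Icc (0:ℝ) 1 | P θ}) ⟨0, fun _ h => h.1.1⟩ ⟨hθ, hP⟩).not_gt hlt

theorem exists_lt_of_csInf_sep_Icc_lt {θ : ℝ} (h1 : P 1)
    (hlt : sInf {θ ∈ Icc (0:ℝ) 1 | P θ} < θ) : ∃ θ' ∈ Icc (0:ℝ) 1, P θ' ∧ θ' < θ := by
  obtain ⟨θ', ⟨hθ', hP⟩, hlt'⟩ :=
    exists_lt_of_csInf_lt (s := {θ ∈ Icc (0:ℝ) 1 | P θ}) ⟨1, ⟨zero_le_one, le_rfl⟩, h1⟩ hlt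
  exact ⟨θ', hθ', hP, hlt'⟩

end FirstInIcc

theorem FeasibleCap.piecewise {cap cap' s : ℝ} {q : ℝ → ℝ} (hq : FeasibleCap cap q)
    (hcap : cap ≤ cap') (hcap' : 0 ≤ cap') :
    FeasibleCap cap' ((Ioi s).piecewise (fun _ => cap') q) := by
  obtain ⟨⟨hmeas, hq0⟩, hmono, hqcap⟩ := hq
  refine ⟨⟨measurable_const.piecewise measurableSet_Ioi hmeas, fun θ hθ => ?_⟩,
    fun x hx y hy hxy => ?_, fun θ hθ => ?_⟩
  · by_cases h : θ ∈ Ioi s <;> simp [h, hcap', hq0 θ hθ]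
  · by_cases hx' : x ∈ Ioi s
    · simp [hx', mem_Ioi.mpr (lt_of_lt_of_le hx' hxy)]
    by_cases hy' : y ∈ Ioi s
    · simpa [hx', hy'] using (hqcap x hx).trans hcap
    · simpa [hx', hy'] using hmono hx hy hxy
  · by_cases h : θ ∈ Ioi s
    · simp [h]
    · simpa [h] using (hqcap θ hθ).trans hcap

theorem IsVSMax.bfun_zero {F g : ℝ → ℝ} {βe : ℝ → EReal} (hβ : IsVSMax F g βe) :
    bfun βe 0 = 0 := by
  refine csInf_sep_Icc_eq_zero fun θ hθ => ?_
  rcases le_or_gt 0 (phi F θ) with h | h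
  · rw [(hβ θ hθ).1 h]; exact le_top
  · obtain ⟨qb, heq, hqb, -⟩ := (hβ θ hθ).2 h
    rw [heq]; exact_mod_cast hqb

namespace MainModel

variable {F g c : ℝ → ℝ} {βe : ℝ → EReal}

theorem differentiable_F (hM : MainModel F g c) : Differentiable ℝ F :=
  hM.F_smooth.differentiable (by norm_num)

theorem continuous_deriv_F (hM : MainModel F g c) : Continuous (deriv F) :=
  hM.F_smooth.continuous_deriv (by norm_num)

theorem continuousOn_phi (hM : MainModel F g c) : ContinuousOn (phi F) (Icc 0 1) :=
  continuousOn_id.sub <| (continuousOn_const.sub hM.differentiable_F.continuous.continuousOn).div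
    hM.continuous_deriv_F.continuousOn fun θ hθ => (hM.F_density_pos θ hθ).ne'

theorem phi_one (hM : MainModel F g c) : phi F 1 = 1 := by
  simp [phi, hM.F_one]

theorem phi_le_one (hM : MainModel F g c) {θ : ℝ} (hθ : θ ∈ Icc (0:ℝ) 1) : phi F θ ≤ 1 :=
  hM.phi_one ▸ hM.phi_mono.monotoneOn hθ ⟨zero_le_one, le_rfl⟩ hθ.2

theorem g_nonneg (hM : MainModel F g c) {x : ℝ} (hx : 0 ≤ x) : 0 ≤ g x :=
  hM.g_zero ▸ hM.g_mono.monotoneOn self_mem_Ici hx hx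

theorem deriv_g_pos (hM : MainModel F g c) {x : ℝ} (hx : 0 < x) : 0 < deriv g x := by
  have hchord := hM.g_concave.concaveOn.sub_le_deriv_mul_sub (x := x) (y := x + 1) hx.le
    (show x + 1 ∈ Ici 0 by simp; linarith) (lt_add_one x) (hM.g_diff x hx)
  have hinc := hM.g_mono hx.le (show x + 1 ∈ Ici 0 by simp; linarith) (lt_add_one x)
  linarith

theorem deriv_g_strictAntiOn (hM : MainModel F g c) : StrictAntiOn (deriv g) (Ioi 0) :=
  (hM.g_concave.subset Ioi_subset_Ici_self (convex_Ioi 0)).strictAntiOn_deriv hM.g_diff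

theorem deriv_g_eq_neg_of_maximizes (hM : MainModel F g c) {p x : ℝ} (hx : 0 < x)
    (hmax : ∀ y, 0 ≤ y → g y + p * y ≤ g x + p * x) : deriv g x = -p := by
  have hloc : IsLocalMax (fun y => g y + p * y) x :=
    IsMaxOn.isLocalMax (fun y hy => hmax y hy) (Ici_mem_nhds hx)
  have h := hloc.hasDerivAt_eq_zero
    ((hM.g_diff x hx).hasDerivAt.add ((hasDerivAt_id x).const_mul p))
  simp only [mul_one] at h
  linarith

theorem add_mul_le_of_neg_deriv_le (hM : MainModel F g c) {p x y : ℝ} (hx : 0 ≤ x)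
    (hxy : x ≤ y) (hp : -deriv g y ≤ p) : g x + p * x ≤ g y + p * y := by
  rcases hxy.eq_or_lt with rfl | hlt
  · rfl
  have hchord := hM.g_concave.deriv_mul_sub_lt_sub hx (show y ∈ Ici 0 by simp; linarith) hlt
    (hM.g_diff y (hx.trans_lt hlt))
  nlinarith [mul_le_mul_of_nonneg_right hp (sub_nonneg.mpr hxy)]

theorem coe_le_βe_one (hM : MainModel F g c) (hβ : IsVSMax F g βe) (q : ℝ) :
    (q : EReal) ≤ βe 1 := by
  rw [(hβ 1 ⟨zero_le_one, le_rfl⟩).1 (by rw [hM.phi_one]; exact zero_le_one)]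
  exact le_top

theorem bfun_mem_Icc (hM : MainModel F g c) (hβ : IsVSMax F g βe) (q : ℝ) :
    bfun βe q ∈ Icc (0:ℝ) 1 :=
  csInf_sep_Icc_mem_Icc (hM.coe_le_βe_one hβ q)

theorem phi_lt_of_lt_bfun (hM : MainModel F g c) (hβ : IsVSMax F g βe) {q θ : ℝ}
    (hq : 0 < q) (hθ : θ ∈ Icc (0:ℝ) 1) (hlt : θ < bfun βe q) : phi F θ < -deriv g q := by
  have hnot := not_of_lt_csInf_sep_Icc hθ hlt
  have hφ : phi F θ < 0 := not_le.mp fun h => hnot (by rw [(hβ θ hθ).1 h]; exact le_top)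
  obtain ⟨qb, heq, hqb, hmax⟩ := (hβ θ hθ).2 hφ
  have hqbq : qb < q := not_le.mp fun h => hnot (by rw [heq]; exact_mod_cast h)
  have hchord := hM.g_concave.deriv_mul_sub_lt_sub hqb hq.le hqbq (hM.g_diff q hq)
  have hopt := hmax q hq.le
  by_contra h
  nlinarith [mul_le_mul_of_nonneg_right (not_lt.mp h) (sub_pos.mpr hqbq).le]

theorem neg_deriv_le_phi_of_bfun_lt (hM : MainModel F g c) (hβ : IsVSMax F g βe) {q θ : ℝ}
    (hq : 0 < q) (hθ : θ ∈ Icc (0:ℝ) 1) (hlt : bfun βe q < θ) : -deriv g q ≤ phi F θ := by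
  rcases le_or_gt 0 (phi F θ) with h | hφ
  · linarith [hM.deriv_g_pos hq]
  obtain ⟨qb, heq, hqb, hmax⟩ := (hβ θ hθ).2 hφ
  obtain ⟨θ', hθ', hqθ', hθ'θ⟩ := exists_lt_of_csInf_sep_Icc_lt (hM.coe_le_βe_one hβ q) hlt
  have hφθ' := hM.phi_mono hθ' hθ hθ'θ
  obtain ⟨qb', heq', hqb', hmax'⟩ := (hβ θ' hθ').2 (hφθ'.trans hφ)
  have hqqb' : q ≤ qb' := by rw [heq'] at hqθ'; exact_mod_cast hqθ'
  have hqqb : q ≤ qb :=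
    hqqb'.trans (le_of_maximizes_add_mul hφθ' (hmax' qb hqb) (hmax qb' hqb'))
  have hderiv := hM.deriv_g_eq_neg_of_maximizes (hq.trans_le hqqb) hmax
  have hanti := hM.deriv_g_strictAntiOn.antitoneOn hq (hq.trans_le hqqb) hqqb
  linarith

theorem neg_deriv_le_phi_of_bfun_le (hM : MainModel F g c) (hβ : IsVSMax F g βe) {q θ : ℝ}
    (hq : 0 < q) (hθ : θ ∈ Icc (0:ℝ) 1) (hle : bfun βe q ≤ θ) : -deriv g q ≤ phi F θ := by
  rcases hle.lt_or_eq with hlt | rfl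
  · exact hM.neg_deriv_le_phi_of_bfun_lt hβ hq hθ hlt
  rcases hθ.2.lt_or_eq with h1 | h1
  · refine ContinuousWithinAt.closure_le (s := Ioo (bfun βe q) 1) ?_ continuousWithinAt_const
      ((hM.continuousOn_phi _ hθ).mono fun x hx => ⟨hθ.1.trans hx.1.le, hx.2.le⟩) fun x hx =>
        hM.neg_deriv_le_phi_of_bfun_lt hβ hq ⟨hθ.1.trans hx.1.le, hx.2.le⟩ hx.1
    rw [closure_Ioo h1.ne]
    exact ⟨le_rfl, h1.le⟩
  · rw [h1, hM.phi_one]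
    linarith [hM.deriv_g_pos hq]

theorem lt_bfun_of_phi_lt (hM : MainModel F g c) (hβ : IsVSMax F g βe) {q θ : ℝ}
    (hq : 0 < q) (hθ : θ ∈ Icc (0:ℝ) 1) (hφ : phi F θ < -deriv g q) : θ < bfun βe q :=
  not_le.mp fun hle => (hM.neg_deriv_le_phi_of_bfun_le hβ hq hθ hle).not_gt hφ

theorem bN_mem_Icc (hM : MainModel F g c) {q : ℝ} (hq : 0 ≤ q) : bN F g q ∈ Icc (0:ℝ) 1 :=
  csInf_sep_Icc_mem_Icc (by rw [hM.phi_one]; linarith [hM.g_nonneg hq])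

theorem bN_zero (hM : MainModel F g c) : bN F g 0 = 0 :=
  csInf_sep_Icc_eq_zero fun _ _ => by simp [hM.g_zero]

theorem phi_bN_lt_neg_deriv (hM : MainModel F g c) {q : ℝ} (hq : 0 < q) (hb : 0 < bN F g q) :
    phi F (bN F g q) < -deriv g q := by
  have hbN := hM.bN_mem_Icc hq.le
  have hsub : Ico 0 (bN F g q) ⊆ Icc (0:ℝ) 1 := fun x hx => ⟨hx.1, hx.2.le.trans hbN.2⟩
  have hle : g q + phi F (bN F g q) * q ≤ 0 := by
    have hcont : ContinuousWithinAt (fun θ => g q + phi F θ * q) (Ico 0 (bN F g q)) (bN F g q) :=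
      (continuousWithinAt_const.add ((hM.continuousOn_phi _ hbN).mul
        continuousWithinAt_const)).mono hsub
    refine ContinuousWithinAt.closure_le ?_ hcont continuousWithinAt_const fun x hx => not_le.mp
      (not_of_lt_csInf_sep_Icc (P := fun θ => 0 ≤ g q + phi F θ * q) (hsub hx) hx.2) |>.le
    rw [closure_Ico hb.ne]
    exact ⟨hb.le, le_rfl⟩
  have hchord := hM.g_concave.deriv_mul_sub_lt_sub (self_mem_Ici) hq.le hq (hM.g_diff q hq)
  rw [hM.g_zero, sub_zero, sub_zero] at hchord
  nlinarith

theorem bN_lt_bfun (hM : MainModel F g c) (hβ : IsVSMax F g βe) {q qM : ℝ} (hqM : 0 < qM)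
    (hb : 0 < bfun βe qM) (hq : 0 ≤ q) (hqq : q ≤ qM) : bN F g q < bfun βe qM := by
  rcases hq.eq_or_lt with rfl | hq
  · rwa [hM.bN_zero]
  rcases (hM.bN_mem_Icc hq.le).1.eq_or_lt with h0 | h0
  · rwa [← h0]
  refine hM.lt_bfun_of_phi_lt hβ hqM (hM.bN_mem_Icc hq.le) ?_
  linarith [hM.phi_bN_lt_neg_deriv hq h0, hM.deriv_g_strictAntiOn.antitoneOn hq hqM hqq]

theorem continuous_cutoffRevenue (hM : MainModel F g c) (a b : ℝ) :
    Continuous (cutoffRevenue F a b) := by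
  have := hM.differentiable_F.continuous
  unfold cutoffRevenue
  fun_prop

theorem hasDerivAt_cutoffRevenue (hM : MainModel F g c) (a b : ℝ) {θ : ℝ}
    (hθ : θ ∈ Icc (0:ℝ) 1) :
    HasDerivAt (cutoffRevenue F a b) (-((a + b * phi F θ) * deriv F θ)) θ := by
  have h := ((hM.differentiable_F θ).hasDerivAt.const_sub 1).mul
    (((hasDerivAt_id θ).mul_const b).const_add a)
  refine h.congr_deriv ?_
  have := (hM.F_density_pos θ hθ).ne'
  unfold phi
  field_simp
  simp only [id]
  ring

theorem continuousOn_cutoffIntegrand (hM : MainModel F g c) (a b : ℝ) :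
    ContinuousOn (fun θ => (a + b * phi F θ) * deriv F θ) (Icc 0 1) :=
  (continuousOn_const.add (continuousOn_const.mul hM.continuousOn_phi)).mul
    hM.continuous_deriv_F.continuousOn

theorem integral_eq_cutoffRevenue (hM : MainModel F g c) (a b : ℝ) {s : ℝ}
    (hs : s ∈ Icc (0:ℝ) 1) :
    ∫ θ in s..1, (a + b * phi F θ) * deriv F θ = cutoffRevenue F a b s := by
  have hsub : uIcc s 1 ⊆ Icc (0:ℝ) 1 := by
    rw [uIcc_of_le hs.2]; exact Icc_subset_Icc hs.1 le_rfl
  rw [intervalIntegral.integral_eq_sub_of_hasDerivAt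
    (f := fun θ => -cutoffRevenue F a b θ) (fun θ hθ => (hM.hasDerivAt_cutoffRevenue a b
      (hsub hθ)).neg |>.congr_deriv (neg_neg _))
    ((hM.continuousOn_cutoffIntegrand a b).mono hsub).intervalIntegrable]
  rw [cutoffRevenue, hM.F_one]
  ring

theorem cutoffRevenue_le_of_nonpos (hM : MainModel F g c) {a b s t : ℝ} (hs : 0 ≤ s)
    (hst : s ≤ t) (ht : t ≤ 1) (h : ∀ θ ∈ Ioo s t, a + b * phi F θ ≤ 0) :
    cutoffRevenue F a b s ≤ cutoffRevenue F a b t := by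
  refine monotoneOn_of_hasDerivWithinAt_nonneg (f' := fun θ => -((a + b * phi F θ) * deriv F θ))
    (convex_Icc s t) (hM.continuous_cutoffRevenue a b).continuousOn (fun θ hθ => ?_)
    (fun θ hθ => ?_) ⟨le_rfl, hst⟩ ⟨hst, le_rfl⟩ hst <;> rw [interior_Icc] at hθ
  · exact (hM.hasDerivAt_cutoffRevenue a b ⟨hs.trans hθ.1.le, hθ.2.le.trans ht⟩).hasDerivWithinAt
  · exact neg_nonneg.mpr (mul_nonpos_of_nonpos_of_nonneg (h θ hθ)
      (hM.F_density_pos θ ⟨hs.trans hθ.1.le, hθ.2.le.trans ht⟩).le)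

theorem cutoffRevenue_lt_of_neg (hM : MainModel F g c) {a b s t : ℝ} (hs : 0 ≤ s)
    (hst : s < t) (ht : t ≤ 1) (h : ∀ θ ∈ Ioo s t, a + b * phi F θ < 0) :
    cutoffRevenue F a b s < cutoffRevenue F a b t := by
  refine strictMonoOn_of_hasDerivWithinAt_pos (f' := fun θ => -((a + b * phi F θ) * deriv F θ))
    (convex_Icc s t) (hM.continuous_cutoffRevenue a b).continuousOn (fun θ hθ => ?_)
    (fun θ hθ => ?_) ⟨le_rfl, hst.le⟩ ⟨hst.le, le_rfl⟩ hst <;> rw [interior_Icc] at hθ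
  · exact (hM.hasDerivAt_cutoffRevenue a b ⟨hs.trans hθ.1.le, hθ.2.le.trans ht⟩).hasDerivWithinAt
  · exact neg_pos.mpr (mul_neg_of_neg_of_pos (h θ hθ)
      (hM.F_density_pos θ ⟨hs.trans hθ.1.le, hθ.2.le.trans ht⟩))

theorem intervalIntegrable_virtSurplus (hM : MainModel F g c) {q : ℝ → ℝ}
    (hmono : MonotoneOn q (Icc 0 1)) (hq : ∀ θ ∈ Icc (0:ℝ) 1, 0 ≤ q θ) :
    IntervalIntegrable (fun θ => (g (q θ) + phi F θ * q θ) * deriv F θ) volume 0 1 := by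
  rw [← uIcc_of_le zero_le_one] at hmono hq
  have hgq : MonotoneOn (g ∘ q) (uIcc 0 1) :=
    hM.g_mono.monotoneOn.comp hmono fun θ hθ => hq θ hθ
  have hD : ContinuousOn (deriv F) (uIcc 0 1) := hM.continuous_deriv_F.continuousOn
  have hφD : ContinuousOn (fun θ => phi F θ * deriv F θ) (uIcc 0 1) :=
    (hM.continuousOn_phi.mono (uIcc_of_le zero_le_one).subset).mul hD
  exact ((hgq.intervalIntegrable.mul_continuousOn hD).add
    (hmono.intervalIntegrable.mul_continuousOn hφD)).congr_ae
    (.of_forall fun θ => by simp only [Function.comp]; ring)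

theorem virtSurplus_le (hM : MainModel F g c) {cap : ℝ} {q : ℝ → ℝ} (hq : FeasibleCap cap q) :
    virtSurplus F g q ≤ g cap + cap := by
  obtain ⟨⟨-, hq0⟩, hmono, hcap⟩ := hq
  have hcap0 : 0 ≤ cap := (hq0 0 ⟨le_rfl, zero_le_one⟩).trans (hcap 0 ⟨le_rfl, zero_le_one⟩)
  have hbound := intervalIntegral.integral_mono_on zero_le_one
    (hM.intervalIntegrable_virtSurplus hmono hq0)
    ((hM.continuous_deriv_F.const_mul (g cap + cap)).intervalIntegrable 0 1) fun θ hθ => by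
      refine mul_le_mul_of_nonneg_right ?_ (hM.F_density_pos θ hθ).le
      have hg : g (q θ) ≤ g cap := hM.g_mono.monotoneOn (hq0 θ hθ) hcap0 (hcap θ hθ)
      nlinarith [hM.phi_le_one hθ, hq0 θ hθ, hcap θ hθ]
  have hint := hM.integral_eq_cutoffRevenue (g cap + cap) 0 ⟨le_rfl, zero_le_one⟩
  simp only [zero_mul, add_zero, cutoffRevenue, hM.F_zero, sub_zero, one_mul] at hint
  exact hbound.trans_eq hint

theorem bddAbove_virtSurplus (hM : MainModel F g c) (cap : ℝ) :
    BddAbove {v | ∃ q : ℝ → ℝ, FeasibleCap cap q ∧ v = virtSurplus F g q} :=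
  ⟨g cap + cap, by rintro _ ⟨q, hq, rfl⟩; exact hM.virtSurplus_le hq⟩

theorem virtSurplus_add_cutoffRevenue_le (hM : MainModel F g c) (hβ : IsVSMax F g βe)
    {qM q s : ℝ} {qa : ℝ → ℝ} (hqM : 0 < qM) (hq : qM ≤ q) (hs : s ∈ Icc (0:ℝ) 1)
    (hbs : bfun βe qM ≤ s) (hqa : FeasibleCap qM qa) :
    virtSurplus F g qa + cutoffRevenue F (g q - g qM) (q - qM) s ≤
      virtSurplus F g ((Ioi s).piecewise (fun _ => q) qa) := by
  set qt := (Ioi s).piecewise (fun _ => q) qa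
  have hqt : FeasibleCap q qt := hqa.piecewise hq (hqM.le.trans hq)
  have hia := hM.intervalIntegrable_virtSurplus hqa.2.1 hqa.1.2
  have hit := hM.intervalIntegrable_virtSurplus hqt.2.1 hqt.1.2
  have hs' : s ∈ uIcc (0:ℝ) 1 := by rwa [uIcc_of_le zero_le_one]
  have h0s : uIcc 0 s ⊆ uIcc (0:ℝ) 1 := uIcc_subset_uIcc left_mem_uIcc hs'
  have hs1 : uIcc s 1 ⊆ uIcc (0:ℝ) 1 := uIcc_subset_uIcc hs' right_mem_uIcc
  have hleft : ∫ θ in 0..s, (g (qt θ) + phi F θ * qt θ) * deriv F θ =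
      ∫ θ in 0..s, (g (qa θ) + phi F θ * qa θ) * deriv F θ := by
    refine intervalIntegral.integral_congr fun θ hθ => ?_
    rw [uIcc_of_le hs.1] at hθ
    simp only [qt, piecewise_eq_of_notMem (Ioi s) _ _ (show θ ∉ Ioi s from not_lt.mpr hθ.2)]
  have hright : (∫ θ in s..1, (g (qa θ) + phi F θ * qa θ) * deriv F θ) +
      cutoffRevenue F (g q - g qM) (q - qM) s ≤
      ∫ θ in s..1, (g (qt θ) + phi F θ * qt θ) * deriv F θ := by
    have hk := ((hM.continuousOn_cutoffIntegrand (g q - g qM) (q - qM)).mono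
      (Icc_subset_Icc hs.1 le_rfl)).intervalIntegrable_of_Icc (μ := volume) hs.2
    rw [← hM.integral_eq_cutoffRevenue _ _ hs,
      ← intervalIntegral.integral_add (hia.mono_set hs1) hk]
    refine intervalIntegral.integral_mono_on_of_le_Ioo hs.2 ((hia.mono_set hs1).add hk)
      (hit.mono_set hs1) fun θ hθ => ?_
    have hθ01 : θ ∈ Icc (0:ℝ) 1 := ⟨hs.1.trans hθ.1.le, hθ.2.le⟩
    have hqtθ : qt θ = q := piecewise_eq_of_mem _ _ _ hθ.1
    have hopt := hM.add_mul_le_of_neg_deriv_le (hqa.1.2 θ hθ01) (hqa.2.2 θ hθ01)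
      (hM.neg_deriv_le_phi_of_bfun_le hβ hqM hθ01 (hbs.trans hθ.1.le))
    rw [hqtθ]
    nlinarith [mul_le_mul_of_nonneg_right hopt (hM.F_density_pos θ hθ01).le]
  unfold virtSurplus
  rw [← intervalIntegral.integral_add_adjacent_intervals (hia.mono_set h0s) (hia.mono_set hs1),
    ← intervalIntegral.integral_add_adjacent_intervals (hit.mono_set h0s) (hit.mono_set hs1),
    hleft]
  linarith

theorem Vval_add_cutoffRevenue_le (hM : MainModel F g c) (hβ : IsVSMax F g βe)
    {qM q s : ℝ} (hqM : 0 < qM) (hq : qM ≤ q) (hs : s ∈ Icc (0:ℝ) 1) (hbs : bfun βe qM ≤ s) :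
    Vval F g qM + cutoffRevenue F (g q - g qM) (q - qM) s ≤ Vval F g q := by
  rw [← le_sub_iff_add_le]
  refine csSup_le ⟨_, fun _ => 0,
    ⟨⟨measurable_const, fun _ _ => le_rfl⟩, fun _ _ _ _ _ => le_rfl, fun _ _ => hqM.le⟩, rfl⟩ ?_
  rintro _ ⟨qa, hqa, rfl⟩
  rw [le_sub_iff_add_le]
  exact (hM.virtSurplus_add_cutoffRevenue_le hβ hqM hq hs hbs hqa).trans
    (le_csSup (hM.bddAbove_virtSurplus q) ⟨_, hqa.piecewise hq (hqM.le.trans hq), rfl⟩)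

theorem VN_eq_sSup_image (q : ℝ) : VN F g q = sSup (cutoffRevenue F (g q) q '' Icc 0 1) := by
  unfold VN cutoffRevenue
  congr 1
  ext v
  simp [eq_comm]

theorem cutoffRevenue_le_VN (hM : MainModel F g c) (q : ℝ) {θ : ℝ} (hθ : θ ∈ Icc (0:ℝ) 1) :
    cutoffRevenue F (g q) q θ ≤ VN F g q := by
  rw [VN_eq_sSup_image]
  exact le_csSup (isCompact_Icc.bddAbove_image (hM.continuous_cutoffRevenue _ _).continuousOn)
    (mem_image_of_mem _ hθ)

theorem exists_VN_eq_cutoffRevenue (hM : MainModel F g c) (q : ℝ) :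
    ∃ θ ∈ Icc (0:ℝ) 1, VN F g q = cutoffRevenue F (g q) q θ := by
  obtain ⟨θ, hθ, h⟩ := (isCompact_Icc.image_of_continuousOn
    (hM.continuous_cutoffRevenue (g q) q).continuousOn).sSup_mem
    ((nonempty_Icc.mpr zero_le_one).image _)
  exact ⟨θ, hθ, by rw [VN_eq_sSup_image, h]⟩

theorem VN_sub_le_Vval_sub (hM : MainModel F g c) (hβ : IsVSMax F g βe) {qM q : ℝ}
    (hqM : 0 < qM) (hq : qM < q) : VN F g q - VN F g qM ≤ Vval F g q - Vval F g qM := by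
  obtain ⟨θ, hθ, hVN⟩ := hM.exists_VN_eq_cutoffRevenue q
  set s := max θ (bfun βe qM)
  have hs1 : s ≤ 1 := max_le hθ.2 (hM.bfun_mem_Icc hβ qM).2
  have hchord := hM.g_concave.concaveOn.sub_le_deriv_mul_sub hqM.le (hqM.trans hq).le hq
    (hM.g_diff qM hqM)
  have hmono : cutoffRevenue F (g q - g qM) (q - qM) θ ≤
      cutoffRevenue F (g q - g qM) (q - qM) s := by
    refine hM.cutoffRevenue_le_of_nonpos hθ.1 (le_max_left _ _) hs1 fun x hx => ?_
    have hxb : x < bfun βe qM := (lt_max_iff.mp hx.2).resolve_left (not_lt.mpr hx.1.le)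
    have hφ := hM.phi_lt_of_lt_bfun hβ hqM ⟨hθ.1.trans hx.1.le, hx.2.le.trans hs1⟩ hxb
    nlinarith [mul_le_mul_of_nonneg_right hφ.le (sub_pos.mpr hq).le]
  have hgain := hM.Vval_add_cutoffRevenue_le hβ hqM hq.le
    ⟨hθ.1.trans (le_max_left _ _), hs1⟩ (le_max_right θ (bfun βe qM))
  have hVNqM := hM.cutoffRevenue_le_VN qM hθ
  rw [hVN]
  unfold cutoffRevenue at *
  linarith

theorem cutoffRevenue_bN_lt_bfun (hM : MainModel F g c) (hβ : IsVSMax F g βe) {q : ℝ}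
    (hq : 0 < q) (hb : 0 < bfun βe q) :
    cutoffRevenue F (deriv g q) 1 (bN F g q) < cutoffRevenue F (deriv g q) 1 (bfun βe q) :=
  hM.cutoffRevenue_lt_of_neg (hM.bN_mem_Icc hq.le).1 (hM.bN_lt_bfun hβ hq hb hq.le le_rfl)
    (hM.bfun_mem_Icc hβ q).2 fun θ hθ => by
      have := hM.phi_lt_of_lt_bfun hβ hq
        ⟨(hM.bN_mem_Icc hq.le).1.trans hθ.1.le, hθ.2.le.trans (hM.bfun_mem_Icc hβ q).2⟩ hθ.2
      linarith

end MainModel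

/-- Proposition 6: no screening. If the monopolist does not fully
bunch, i.e. `b(q^M) > 0`, then the non-discriminating monopolist's optimal quality
satisfies `q_N^M < q^M` and `b_N(q_N^M) < b(q^M)`. -/
theorem stmt5 (F g c : ℝ → ℝ) (hM : MainModel F g c)
    (βe : ℝ → EReal) (hβ : IsVSMax F g βe)
    (qM : ℝ)
    (hqM : 0 ≤ qM ∧
      (1 - F (bfun βe qM)) * (bfun βe qM + deriv g qM) = deriv c qM ∧
      ∀ q : ℝ, 0 ≤ q → Vval F g q - c q ≤ Vval F g qM - c qM)
    (qNM : ℝ)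
    (hqNM : 0 ≤ qNM ∧
      (1 - F (bN F g qNM)) * (deriv g qNM + bN F g qNM) = deriv c qNM ∧
      (∀ q : ℝ, 0 ≤ q → VN F g q - c q ≤ VN F g qNM - c qNM) ∧
      ∀ q : ℝ, 0 ≤ q →
        (∀ q' : ℝ, 0 ≤ q' → VN F g q' - c q' ≤ VN F g q - c q) → q = qNM) :
    0 < bfun βe qM → qNM < qM ∧ bN F g qNM < bfun βe qM := by
  intro hbM
  obtain ⟨hqM0, hFOCM, hoptM⟩ := hqM
  obtain ⟨hqNM0, hFOCN, hoptN, huniqN⟩ := hqNM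
  have hqMpos : 0 < qM := hqM0.lt_of_ne <| by rintro rfl; simp [hβ.bfun_zero] at hbM
  have hlt : qNM < qM := by
    rcases lt_trichotomy qNM qM with h | rfl | h
    · exact h
    · have h := hM.cutoffRevenue_bN_lt_bfun hβ hqMpos hbM
      simp only [cutoffRevenue, mul_one] at h
      linarith
    · have hstrict : VN F g qM - c qM < VN F g qNM - c qNM :=
        (hoptN qM hqM0).lt_of_ne fun heq =>
          h.ne (huniqN qM hqM0 fun q' hq' => heq ▸ hoptN q' hq')
      linarith [hM.VN_sub_le_Vval_sub hβ hqMpos h, hoptM qNM hqNM0]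
  exact ⟨hlt, hM.bN_lt_bfun hβ hqMpos hbM hqNM0 hlt.le⟩
end
end

section
/- In the general model, an allocation q is efficient if and only if q solves the q*-constrained welfare problem 𝒫*(q*) for some quality q* maximizing q̂ ↦ U(q̂) − c(q̂) over Q. -/
open MeasureTheory Set Filter Topology

noncomputable section

/-- Partial derivative of `u` in the type argument. -/
def u2 (u : ℝ → ℝ → ℝ) (q θ : ℝ) : ℝ := deriv (fun s => u q s) θ

/-- Partial derivative of `u` in the quality argument. -/
def u1 (u : ℝ → ℝ → ℝ) (q θ : ℝ) : ℝ := deriv (fun s => u s θ) q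

/-- The virtual surplus `J(q,θ) = u(q,θ) - (1-F(θ))/F'(θ) · u₂(q,θ) - k(q)`. -/
def Jfun (F : ℝ → ℝ) (u : ℝ → ℝ → ℝ) (k : ℝ → ℝ) (q θ : ℝ) : ℝ :=
  u q θ - (1 - F θ) / deriv F θ * u2 u q θ - k q

/-- Partial derivative of the virtual surplus in the quality argument. -/
def J1 (F : ℝ → ℝ) (u : ℝ → ℝ → ℝ) (k : ℝ → ℝ) (q θ : ℝ) : ℝ :=
  deriv (fun s => Jfun F u k s θ) q

/-- Strict quasiconcavity on a set of reals. -/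
def StrictQuasiconcaveOn (s : Set ℝ) (f : ℝ → ℝ) : Prop :=
  ∀ x ∈ s, ∀ y ∈ s, x ≠ y → ∀ t : ℝ, 0 < t → t < 1 →
    min (f x) (f y) < f (t * x + (1 - t) * y)

/-- Standing hypotheses of the general model of the Appendix. -/
structure GenModel (qbar : ℝ) (F : ℝ → ℝ) (u : ℝ → ℝ → ℝ) (k c : ℝ → ℝ) : Prop where
  qbar_pos : 0 < qbar
  F_smooth : ContDiff ℝ 2 F
  F_zero : F 0 = 0
  F_one : F 1 = 1
  F_mono : Monotone F
  F_density_pos : ∀ θ ∈ Icc (0:ℝ) 1, 0 < deriv F θ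
  u_smooth : ContDiff ℝ 2 (fun p : ℝ × ℝ => u p.1 p.2)
  u_incr_diff : ∀ q q' θ θ' : ℝ, q ≤ q' → θ ≤ θ' →
    u q' θ - u q θ ≤ u q' θ' - u q θ'
  u_concave : ∀ θ ∈ Icc (0:ℝ) 1, ConcaveOn ℝ (Icc (0:ℝ) qbar) (fun q => u q θ)
  uk_strict_qc : ∃ S : Set ℝ, S.Countable ∧ ∀ θ ∈ Icc (0:ℝ) 1 \ S,
    StrictQuasiconcaveOn (Icc (0:ℝ) qbar) (fun q => u q θ - k q)
  k_convex : ConvexOn ℝ (Icc (0:ℝ) qbar) k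
  k_smooth : ContDiff ℝ 2 k
  k_mono : MonotoneOn k (Icc (0:ℝ) qbar)
  c_mono : StrictMonoOn c (Icc (0:ℝ) qbar)
  c_convex : StrictConvexOn ℝ (Icc (0:ℝ) qbar) c
  c_diff : ∀ q ∈ Icc (0:ℝ) qbar, DifferentiableAt ℝ c q
  J_incr_diff : ∀ q q' θ θ' : ℝ, q ≤ q' → θ ≤ θ' →
    Jfun F u k q' θ - Jfun F u k q θ ≤ Jfun F u k q' θ' - Jfun F u k q θ'
  J_concave : ∀ θ ∈ Icc (0:ℝ) 1, ConcaveOn ℝ (Icc (0:ℝ) qbar) (fun q => Jfun F u k q θ)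
  J_strict_qc : ∃ S : Set ℝ, S.Countable ∧ ∀ θ ∈ Icc (0:ℝ) 1 \ S,
    StrictQuasiconcaveOn (Icc (0:ℝ) qbar) (fun q => Jfun F u k q θ)
  c_boundary : ∃ L₀ L₁ : ℝ,
    Tendsto (fun q => (∫ θ in (0:ℝ)..1, J1 F u k q θ * deriv F θ) - deriv c q)
      (nhdsWithin 0 (Ioi 0)) (nhds L₀) ∧
    Tendsto (fun q => (∫ θ in (0:ℝ)..1, J1 F u k q θ * deriv F θ) - deriv c q)
      (nhdsWithin qbar (Iio qbar)) (nhds L₁) ∧ 0 < L₀ ∧ L₁ < 0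

/-- An allocation in the general model: a measurable map from `Θ` into `Q = [0, qbar]`. -/
def IsAllocG (qbar : ℝ) (q : ℝ → ℝ) : Prop :=
  Measurable q ∧ ∀ θ ∈ Icc (0:ℝ) 1, q θ ∈ Icc (0:ℝ) qbar

/-- Expected gross surplus of an allocation. -/
def objStar (F : ℝ → ℝ) (u : ℝ → ℝ → ℝ) (k : ℝ → ℝ) (q : ℝ → ℝ) : ℝ :=
  ∫ θ in (0:ℝ)..1, (u (q θ) θ - k (q θ)) * deriv F θ

/-- Total welfare of an allocation in the general model. -/
def WelfareG (F : ℝ → ℝ) (u : ℝ → ℝ → ℝ) (k c : ℝ → ℝ) (q : ℝ → ℝ) : ℝ :=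
  objStar F u k q - c (sSup (q '' Icc (0:ℝ) 1))

/-- Efficiency in the general model. -/
def EfficientG (qbar : ℝ) (F : ℝ → ℝ) (u : ℝ → ℝ → ℝ) (k c : ℝ → ℝ) (q : ℝ → ℝ) : Prop :=
  IsAllocG qbar q ∧ ∀ q' : ℝ → ℝ, IsAllocG qbar q' →
    WelfareG F u k c q' ≤ WelfareG F u k c q

/-- Feasibility for the cap-constrained welfare problem `𝒫⋆(qcap)`. -/
def FeasStar (qbar qcap : ℝ) (q : ℝ → ℝ) : Prop :=
  IsAllocG qbar q ∧ ∀ θ ∈ Icc (0:ℝ) 1, q θ ≤ qcap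

/-- The value `U(qcap)` of the cap-constrained welfare problem `𝒫⋆(qcap)`. -/
def Uval (qbar : ℝ) (F : ℝ → ℝ) (u : ℝ → ℝ → ℝ) (k : ℝ → ℝ) (qcap : ℝ) : ℝ :=
  sSup {v | ∃ q : ℝ → ℝ, FeasStar qbar qcap q ∧ v = objStar F u k q}

/-- Solving the cap-constrained welfare problem `𝒫⋆(qcap)`. -/
def SolvesStar (qbar : ℝ) (F : ℝ → ℝ) (u : ℝ → ℝ → ℝ) (k : ℝ → ℝ) (qcap : ℝ)
    (q : ℝ → ℝ) : Prop :=
  FeasStar qbar qcap q ∧ ∀ q' : ℝ → ℝ, FeasStar qbar qcap q' →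
    objStar F u k q' ≤ objStar F u k q

/-- Incentive compatibility and individual rationality in the general model. -/
def ICIRG (u : ℝ → ℝ → ℝ) (q t : ℝ → ℝ) : Prop :=
  ∀ θ ∈ Icc (0:ℝ) 1,
    (∀ θ' ∈ Icc (0:ℝ) 1, u (q θ') θ - t θ' ≤ u (q θ) θ - t θ) ∧ 0 ≤ u (q θ) θ - t θ

/-- Expected revenue of a transfer function. -/
def revenueG (F : ℝ → ℝ) (t : ℝ → ℝ) : ℝ := ∫ θ in (0:ℝ)..1, t θ * deriv F θ

/-- Profit of the seller in the general model. -/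
def profitG (F c : ℝ → ℝ) (q t : ℝ → ℝ) : ℝ :=
  revenueG F t - c (sSup (q '' Icc (0:ℝ) 1))

/-- Monopolist allocation in the general model. -/
def MonopolistG (qbar : ℝ) (F : ℝ → ℝ) (u : ℝ → ℝ → ℝ) (c : ℝ → ℝ) (q : ℝ → ℝ) : Prop :=
  ∃ t : ℝ → ℝ, IsAllocG qbar q ∧ ICIRG u q t ∧
    ∀ q' t' : ℝ → ℝ, IsAllocG qbar q' → ICIRG u q' t' →
      profitG F c q' t' ≤ profitG F c q t

/-- Feasibility for the cap-constrained revenue problem `𝒫(qcap)`. -/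
def FeasCapM (qbar : ℝ) (u : ℝ → ℝ → ℝ) (qcap : ℝ) (q t : ℝ → ℝ) : Prop :=
  IsAllocG qbar q ∧ ICIRG u q t ∧ ∀ θ ∈ Icc (0:ℝ) 1, q θ ≤ qcap

/-- The value `V(qcap)` of the cap-constrained revenue problem `𝒫(qcap)`. -/
def VvalG (qbar : ℝ) (F : ℝ → ℝ) (u : ℝ → ℝ → ℝ) (qcap : ℝ) : ℝ :=
  sSup {v | ∃ q t : ℝ → ℝ, FeasCapM qbar u qcap q t ∧ v = revenueG F t}

/-- Solving the cap-constrained revenue problem `𝒫(qcap)`. -/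
def SolvesCapM (qbar : ℝ) (F : ℝ → ℝ) (u : ℝ → ℝ → ℝ) (qcap : ℝ) (q : ℝ → ℝ) : Prop :=
  ∃ t : ℝ → ℝ, FeasCapM qbar u qcap q t ∧
    ∀ q' t' : ℝ → ℝ, FeasCapM qbar u qcap q' t' → revenueG F t' ≤ revenueG F t

/-- Generalized inverse of a (pointwise) maximizer selection. -/
def bof (β : ℝ → ℝ) (q : ℝ) : ℝ := sInf {θ ∈ Icc (0:ℝ) 1 | q ≤ β θ}


/-- Uniform bound on `objStar` over all allocations. -/
lemma allocG_bound {qbar : ℝ} {F : ℝ → ℝ} {u : ℝ → ℝ → ℝ} {k c : ℝ → ℝ}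
    (hM : GenModel qbar F u k c) :
    ∃ M : ℝ, 0 ≤ M ∧ ∀ q : ℝ → ℝ, IsAllocG qbar q → objStar F u k q ≤ M := by
  have hF' : Continuous (deriv F) := hM.F_smooth.continuous_deriv one_le_two
  have hu : Continuous fun p : ℝ × ℝ => u p.1 p.2 := hM.u_smooth.continuous
  have hk : Continuous k := hM.k_smooth.continuous
  set g : ℝ × ℝ → ℝ := fun p => |(u p.1 p.2 - k p.1) * deriv F p.2| with hg
  have hgc : Continuous g :=
    ((hu.sub (hk.comp continuous_fst)).mul (hF'.comp continuous_snd)).abs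
  have hK : IsCompact (Icc (0:ℝ) qbar ×ˢ Icc (0:ℝ) 1) :=
    (isCompact_Icc).prod isCompact_Icc
  have hne : (Icc (0:ℝ) qbar ×ˢ Icc (0:ℝ) 1).Nonempty :=
    ⟨(0,0), ⟨⟨le_refl _, hM.qbar_pos.le⟩, ⟨le_refl _, zero_le_one⟩⟩⟩
  obtain ⟨p0, hp0, hmax⟩ := hK.exists_isMaxOn hne hgc.continuousOn
  refine ⟨g p0, abs_nonneg _, ?_⟩
  intro q hq
  have hb : ∀ θ ∈ Set.uIoc (0:ℝ) 1,
      ‖(u (q θ) θ - k (q θ)) * deriv F θ‖ ≤ g p0 := by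
    intro θ hθ
    rw [Set.uIoc_of_le zero_le_one] at hθ
    have hθ' : θ ∈ Icc (0:ℝ) 1 := ⟨hθ.1.le, hθ.2⟩
    exact hmax (Set.mk_mem_prod (hq.2 θ hθ') hθ')
  have := intervalIntegral.norm_integral_le_of_norm_le_const hb
  unfold objStar
  calc (∫ θ in (0:ℝ)..1, (u (q θ) θ - k (q θ)) * deriv F θ)
      ≤ ‖∫ θ in (0:ℝ)..1, (u (q θ) θ - k (q θ)) * deriv F θ‖ := le_abs_self _
    _ ≤ g p0 * |1 - 0| := this
    _ = g p0 := by norm_num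

/-- The sup of an allocation lies in `[0, qbar]` and dominates the allocation. -/
lemma sSup_alloc_mem {qbar : ℝ} (_hqb : 0 < qbar) {q : ℝ → ℝ}
    (hq : IsAllocG qbar q) :
    sSup (q '' Icc (0:ℝ) 1) ∈ Icc (0:ℝ) qbar ∧
    ∀ θ ∈ Icc (0:ℝ) 1, q θ ≤ sSup (q '' Icc (0:ℝ) 1) := by
  have h01 : (0:ℝ) ∈ Icc (0:ℝ) 1 := ⟨le_refl _, zero_le_one⟩
  have hne : (q '' Icc (0:ℝ) 1).Nonempty := ⟨q 0, ⟨0, h01, rfl⟩⟩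
  have hbdd : BddAbove (q '' Icc (0:ℝ) 1) := by
    refine ⟨qbar, ?_⟩
    rintro x ⟨θ, hθ, rfl⟩
    exact (hq.2 θ hθ).2
  have hle : ∀ θ ∈ Icc (0:ℝ) 1, q θ ≤ sSup (q '' Icc (0:ℝ) 1) :=
    fun θ hθ => le_csSup hbdd ⟨θ, hθ, rfl⟩
  refine ⟨⟨le_trans (hq.2 0 h01).1 (hle 0 h01), ?_⟩, hle⟩
  exact csSup_le hne (by rintro x ⟨θ, hθ, rfl⟩; exact (hq.2 θ hθ).2)

/-- Lemma A.1: efficiency decomposition. An allocation is efficient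
iff it solves `𝒫⋆(q⋆)` for some quality `q⋆` maximizing `q̂ ↦ U(q̂) - c(q̂)` over `Q`. -/
theorem stmt6 (qbar : ℝ) (F : ℝ → ℝ) (u : ℝ → ℝ → ℝ) (k c : ℝ → ℝ)
    (hM : GenModel qbar F u k c) (q : ℝ → ℝ) :
    EfficientG qbar F u k c q ↔
      ∃ qs ∈ Icc (0:ℝ) qbar,
        (∀ qhat ∈ Icc (0:ℝ) qbar,
          Uval qbar F u k qhat - c qhat ≤ Uval qbar F u k qs - c qs) ∧
        SolvesStar qbar F u k qs q := by
  obtain ⟨M, hM0, hMb⟩ := allocG_bound hM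
  have hcmono : MonotoneOn c (Icc (0:ℝ) qbar) := hM.c_mono.monotoneOn
  have hzero : ∀ qcap : ℝ, 0 ≤ qcap → FeasStar qbar qcap (fun _ => 0) := by
    intro qcap hcap
    exact ⟨⟨measurable_const, fun θ _ => ⟨le_refl _, hM.qbar_pos.le⟩⟩, fun θ _ => hcap⟩
  have hbddS : ∀ qcap : ℝ,
      BddAbove {v | ∃ q' : ℝ → ℝ, FeasStar qbar qcap q' ∧ v = objStar F u k q'} := by
    intro qcap
    refine ⟨M, ?_⟩
    rintro v ⟨q', hq', rfl⟩
    exact hMb q' hq'.1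
  have hUle : ∀ q' : ℝ → ℝ, ∀ qcap : ℝ, FeasStar qbar qcap q' →
      objStar F u k q' ≤ Uval qbar F u k qcap := by
    intro q' qcap hq'
    exact le_csSup (hbddS qcap) ⟨q', hq', rfl⟩
  constructor
  · rintro ⟨hqA, hqmax⟩
    obtain ⟨hqsmem, hqsle⟩ := sSup_alloc_mem hM.qbar_pos hqA
    set qs := sSup (q '' Icc (0:ℝ) 1) with hqs
    have hqfeas : FeasStar qbar qs q := ⟨hqA, hqsle⟩
    refine ⟨qs, hqsmem, ?_, ⟨hqfeas, ?_⟩⟩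
    · intro qhat hqhat
      have hne : {v | ∃ q' : ℝ → ℝ, FeasStar qbar qhat q' ∧
          v = objStar F u k q'}.Nonempty :=
        ⟨_, (fun _ => 0), hzero qhat hqhat.1, rfl⟩
      have hkey : Uval qbar F u k qhat ≤ Uval qbar F u k qs - c qs + c qhat := by
        unfold Uval
        refine csSup_le hne ?_
        rintro v ⟨q', hq', rfl⟩
        obtain ⟨hmem', hle'⟩ := sSup_alloc_mem hM.qbar_pos hq'.1
        have hsup_le : sSup (q' '' Icc (0:ℝ) 1) ≤ qhat :=
          csSup_le ⟨q' 0, ⟨0, ⟨le_refl _, zero_le_one⟩, rfl⟩⟩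
            (by rintro x ⟨θ, hθ, rfl⟩; exact hq'.2 θ hθ)
        have hc1 : c (sSup (q' '' Icc (0:ℝ) 1)) ≤ c qhat := hcmono hmem' hqhat hsup_le
        have hW : WelfareG F u k c q' ≤ WelfareG F u k c q := hqmax q' hq'.1
        have hUq : objStar F u k q ≤ Uval qbar F u k qs := hUle q qs hqfeas
        unfold WelfareG at hW
        rw [← hqs] at hW
        unfold Uval at hUq
        linarith
      linarith
    · intro q' hq'
      obtain ⟨hmem', _⟩ := sSup_alloc_mem hM.qbar_pos hq'.1
      have hsup_le : sSup (q' '' Icc (0:ℝ) 1) ≤ qs :=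
        csSup_le ⟨q' 0, ⟨0, ⟨le_refl _, zero_le_one⟩, rfl⟩⟩
          (by rintro x ⟨θ, hθ, rfl⟩; exact hq'.2 θ hθ)
      have hc1 : c (sSup (q' '' Icc (0:ℝ) 1)) ≤ c qs := hcmono hmem' hqsmem hsup_le
      have hW : WelfareG F u k c q' ≤ WelfareG F u k c q := hqmax q' hq'.1
      unfold WelfareG at hW
      rw [← hqs] at hW
      linarith
  · rintro ⟨qs, hqsmem, hmax, ⟨hqfeas, hqsol⟩⟩
    refine ⟨hqfeas.1, ?_⟩
    intro q' hq'
    obtain ⟨hmem', hle'⟩ := sSup_alloc_mem hM.qbar_pos hq'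
    have hfeas' : FeasStar qbar (sSup (q' '' Icc (0:ℝ) 1)) q' := ⟨hq', hle'⟩
    have h1 : objStar F u k q' ≤ Uval qbar F u k (sSup (q' '' Icc (0:ℝ) 1)) :=
      hUle q' _ hfeas'
    have h2 : Uval qbar F u k (sSup (q' '' Icc (0:ℝ) 1)) - c (sSup (q' '' Icc (0:ℝ) 1))
        ≤ Uval qbar F u k qs - c qs := hmax _ hmem'
    have h3 : Uval qbar F u k qs ≤ objStar F u k q := by
      unfold Uval
      refine csSup_le ⟨_, q, hqfeas, rfl⟩ ?_
      rintro v ⟨q'', hq'', rfl⟩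
      exact hqsol q'' hq''
    obtain ⟨hqmem, _⟩ := sSup_alloc_mem hM.qbar_pos hqfeas.1
    have hsup_le : sSup (q '' Icc (0:ℝ) 1) ≤ qs :=
      csSup_le ⟨q 0, ⟨0, ⟨le_refl _, zero_le_one⟩, rfl⟩⟩
        (by rintro x ⟨θ, hθ, rfl⟩; exact hqfeas.2 θ hθ)
    have hc2 : c (sSup (q '' Icc (0:ℝ) 1)) ≤ c qs := hcmono hqmem hqsmem hsup_le
    unfold WelfareG
    linarith
end
end

section
/- In the general model, an allocation q is monopolist if and only if q solves the cap-constrained revenue problem 𝒫(q^M) for a quality q^M maximizing q̂ ↦ V(q̂) − c(q̂) over Q. -/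
open MeasureTheory Set Filter Topology

noncomputable section

section TwoStage

variable {α : Type*} {A : Set α} {f g : α → ℝ} {c : ℝ → ℝ} {I : Set ℝ}

/- Maximizing `f - c ∘ g` over `A` with `c` monotone splits into two stages: for each cap `s`
maximize `f` over `{g ≤ s}`, with value `V s`, then maximize `V s - c s` over the caps. -/
theorem isMaxOn_sub_comp_iff (hc : MonotoneOn c I) (hg : MapsTo g A I)
    (hbdd : ∀ s ∈ I, BddAbove (f '' {y ∈ A | g y ≤ s}))
    (hne : ∀ s ∈ I, {y ∈ A | g y ≤ s}.Nonempty) {x : α} :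
    (x ∈ A ∧ IsMaxOn (fun y => f y - c (g y)) A x) ↔
      ∃ s ∈ I, IsMaxOn (fun s => sSup (f '' {y ∈ A | g y ≤ s}) - c s) I s ∧
        x ∈ {y ∈ A | g y ≤ s} ∧ IsMaxOn f {y ∈ A | g y ≤ s} x := by
  have le_value : ∀ s ∈ I, ∀ y ∈ A, g y ≤ s → f y ≤ sSup (f '' {y ∈ A | g y ≤ s}) :=
    fun s hs y hy hys => le_csSup (hbdd s hs) (mem_image_of_mem f ⟨hy, hys⟩)
  constructor
  · rintro ⟨hx, hmax⟩
    rw [isMaxOn_iff] at hmax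
    have hcap : ∀ s ∈ I, ∀ y ∈ A, g y ≤ s → f y ≤ f x - c (g x) + c s := fun s hs y hy hys => by
      linarith [hmax y hy, hc (hg hy) hs hys]
    refine ⟨g x, hg hx, fun s hs => ?_, ⟨hx, le_rfl⟩, fun y ⟨hy, hyx⟩ => ?_⟩
    · have hV : sSup (f '' {y ∈ A | g y ≤ s}) ≤ f x - c (g x) + c s :=
        csSup_le ((hne s hs).image f) (forall_mem_image.2 fun y ⟨hy, hys⟩ => hcap s hs y hy hys)
      have := le_value (g x) (hg hx) x hx le_rfl
      simp only [mem_ofPred_eq]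
      linarith
    · simpa using hcap (g x) (hg hx) y hy hyx
  · rintro ⟨s, hs, hVmax, ⟨hx, hxs⟩, hfmax⟩
    rw [isMaxOn_iff] at hVmax hfmax
    have hVs : sSup (f '' {y ∈ A | g y ≤ s}) ≤ f x :=
      csSup_le ⟨f x, mem_image_of_mem f ⟨hx, hxs⟩⟩ (forall_mem_image.2 hfmax)
    refine ⟨hx, fun y hy => ?_⟩
    have := hVmax (g y) (hg hy)
    simp only [mem_ofPred_eq] at this ⊢
    linarith [le_value (g y) (hg hy) y hy le_rfl, hc (hg hx) hs hxs]

end TwoStage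

section Allocations

variable {qbar : ℝ} {q : ℝ → ℝ}

lemma IsAllocG.bddAbove_image (hq : IsAllocG qbar q) : BddAbove (q '' Icc (0:ℝ) 1) :=
  ⟨qbar, forall_mem_image.2 fun θ hθ => (hq.2 θ hθ).2⟩

lemma IsAllocG.sSup_image_le_iff (hq : IsAllocG qbar q) {s : ℝ} :
    sSup (q '' Icc (0:ℝ) 1) ≤ s ↔ ∀ θ ∈ Icc (0:ℝ) 1, q θ ≤ s :=
  (csSup_le_iff hq.bddAbove_image ((nonempty_Icc.2 zero_le_one).image q)).trans forall_mem_image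

lemma IsAllocG.sSup_image_mem (hq : IsAllocG qbar q) : sSup (q '' Icc (0:ℝ) 1) ∈ Icc (0:ℝ) qbar :=
  have h0 : (0:ℝ) ∈ Icc (0:ℝ) 1 := left_mem_Icc.2 zero_le_one
  ⟨(hq.2 0 h0).1.trans (le_csSup hq.bddAbove_image (mem_image_of_mem q h0)),
    hq.sSup_image_le_iff.2 fun θ hθ => (hq.2 θ hθ).2⟩

end Allocations

lemma exists_ICIRG_const {u : ℝ → ℝ → ℝ} (a : ℝ) (hu : ContinuousOn (u a) (Icc 0 1)) :
    ∃ t : ℝ → ℝ, ICIRG u (fun _ => a) t := by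
  obtain ⟨θ₀, -, hmin⟩ := isCompact_Icc.exists_isMinOn (nonempty_Icc.2 zero_le_one) hu
  exact ⟨fun _ => u a θ₀, fun θ hθ => ⟨fun _ _ => le_rfl, sub_nonneg.2 (hmin hθ)⟩⟩

/- Individual rationality gives `t θ ≤ u (q θ) θ ≤ max u` on `Q × Θ`; the `max … 0` covers a
non-integrable `t`, whose revenue is the junk value `0`. -/
lemma exists_revenueG_le {qbar : ℝ} {F : ℝ → ℝ} {u : ℝ → ℝ → ℝ} (hqbar : 0 ≤ qbar)
    (hu : Continuous fun p : ℝ × ℝ => u p.1 p.2) (hF : ContDiff ℝ 1 F)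
    (hF' : ∀ θ ∈ Icc (0:ℝ) 1, 0 ≤ deriv F θ) :
    ∃ M : ℝ, ∀ q t : ℝ → ℝ, IsAllocG qbar q → ICIRG u q t → revenueG F t ≤ M := by
  obtain ⟨p₀, -, hp₀⟩ := (isCompact_Icc.prod isCompact_Icc).exists_isMaxOn
    ((nonempty_Icc.2 hqbar).prod (nonempty_Icc.2 zero_le_one)) hu.continuousOn
  set B := u p₀.1 p₀.2
  have hF'c : Continuous (deriv F) := hF.continuous_deriv le_rfl
  refine ⟨max (B * (F 1 - F 0)) 0, fun q t hq ht => ?_⟩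
  by_cases hint : IntervalIntegrable (fun θ => t θ * deriv F θ) volume 0 1
  · refine le_max_of_le_left ?_
    have hle : ∀ θ ∈ Icc (0:ℝ) 1, t θ * deriv F θ ≤ B * deriv F θ := fun θ hθ =>
      mul_le_mul_of_nonneg_right
        ((sub_nonneg.1 (ht θ hθ).2).trans (hp₀ (mk_mem_prod (hq.2 θ hθ) hθ))) (hF' θ hθ)
    calc revenueG F t ≤ ∫ θ in (0:ℝ)..1, B * deriv F θ :=
          intervalIntegral.integral_mono_on zero_le_one hint
            ((continuous_const.mul hF'c).intervalIntegrable 0 1) hle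
      _ = B * (F 1 - F 0) := by
          rw [intervalIntegral.integral_const_mul, intervalIntegral.integral_deriv_eq_sub
            (fun x _ => (hF.differentiable one_ne_zero).differentiableAt)
            (hF'c.intervalIntegrable 0 1)]
  · rw [revenueG, intervalIntegral.integral_undef hint]
    exact le_max_right _ _

def mechanismsG (qbar : ℝ) (u : ℝ → ℝ → ℝ) : Set ((ℝ → ℝ) × (ℝ → ℝ)) :=
  {m | IsAllocG qbar m.1 ∧ ICIRG u m.1 m.2}

def maxQuality (m : (ℝ → ℝ) × (ℝ → ℝ)) : ℝ := sSup (m.1 '' Icc (0:ℝ) 1)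

section Mechanisms

variable {qbar s : ℝ} {F : ℝ → ℝ} {u : ℝ → ℝ → ℝ} {c : ℝ → ℝ} {q t : ℝ → ℝ}

lemma feasCapM_iff_mem :
    FeasCapM qbar u s q t ↔ (q, t) ∈ {m ∈ mechanismsG qbar u | maxQuality m ≤ s} := by
  refine ⟨fun ⟨hq, ht, hs⟩ => ⟨⟨hq, ht⟩, hq.sSup_image_le_iff.2 hs⟩, ?_⟩
  rintro ⟨⟨hq, ht⟩, hs⟩
  exact ⟨hq, ht, hq.sSup_image_le_iff.1 hs⟩

lemma vvalG_eq_sSup_image : VvalG qbar F u s =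
    sSup ((fun m => revenueG F m.2) '' {m ∈ mechanismsG qbar u | maxQuality m ≤ s}) := by
  rw [VvalG]
  congr 1
  ext v
  simp only [mem_ofPred_eq, mem_image, Prod.exists, feasCapM_iff_mem, eq_comm]

lemma monopolistG_iff_isMaxOn : MonopolistG qbar F u c q ↔
    ∃ t, (q, t) ∈ mechanismsG qbar u ∧
      IsMaxOn (fun m => revenueG F m.2 - c (maxQuality m)) (mechanismsG qbar u) (q, t) := by
  simp only [MonopolistG, isMaxOn_iff, mechanismsG, mem_ofPred_eq, Prod.forall, profitG,
    maxQuality]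
  grind

lemma solvesCapM_iff_isMaxOn : SolvesCapM qbar F u s q ↔
    ∃ t, (q, t) ∈ {m ∈ mechanismsG qbar u | maxQuality m ≤ s} ∧
      IsMaxOn (fun m => revenueG F m.2) {m ∈ mechanismsG qbar u | maxQuality m ≤ s} (q, t) := by
  simp only [SolvesCapM, isMaxOn_iff, ← feasCapM_iff_mem, Prod.forall]

end Mechanisms

/-- Lemma A.2: monopolist decomposition in the general model.
An allocation is monopolist iff it solves the cap-constrained revenue problem
`𝒫(q^M)` for a quality `q^M` maximizing `q̂ ↦ V(q̂) - c(q̂)` over `Q`. -/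
theorem stmt9 (qbar : ℝ) (F : ℝ → ℝ) (u : ℝ → ℝ → ℝ) (k c : ℝ → ℝ)
    (hM : GenModel qbar F u k c) (q : ℝ → ℝ) :
    MonopolistG qbar F u c q ↔
      ∃ qM ∈ Icc (0:ℝ) qbar,
        (∀ qhat ∈ Icc (0:ℝ) qbar,
          VvalG qbar F u qhat - c qhat ≤ VvalG qbar F u qM - c qM) ∧
        SolvesCapM qbar F u qM q := by
  have hqbar := hM.qbar_pos.le
  obtain ⟨R, hR⟩ := exists_revenueG_le hqbar hM.u_smooth.continuous
    (hM.F_smooth.of_le one_le_two) fun θ hθ => (hM.F_density_pos θ hθ).le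
  obtain ⟨t₀, ht₀⟩ := exists_ICIRG_const (u := u) 0
    (hM.u_smooth.continuous.comp (Continuous.prodMk_right 0)).continuousOn
  have hzero : IsAllocG qbar fun _ => 0 := ⟨measurable_const, fun _ _ => ⟨le_rfl, hqbar⟩⟩
  have two_stage := fun t => isMaxOn_sub_comp_iff (x := (q, t)) hM.c_mono.monotoneOn
    (fun m hm => hm.1.sSup_image_mem)
    (fun s _ => ⟨R, forall_mem_image.2 fun m hm => hR m.1 m.2 hm.1.1 hm.1.2⟩)
    (fun s hs => ⟨(fun _ => 0, t₀), feasCapM_iff_mem.1 ⟨hzero, ht₀, fun _ _ => hs.1⟩⟩)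
  simp only [monopolistG_iff_isMaxOn, two_stage, vvalG_eq_sSup_image, solvesCapM_iff_isMaxOn,
    ← isMaxOn_iff]
  exact ⟨fun ⟨t, s, hs, hV, h⟩ => ⟨s, hs, hV, t, h⟩, fun ⟨s, hs, hV, t, h⟩ => ⟨t, s, hs, hV, h⟩⟩
end
end

section
/- Consider the N-player production game in which each player i chooses q_i ∈ ℝ₊ and receives payoff Π_i(q₁,…,q_N) = max{V(q_i) − V(max_{j≠i} q_j), 0} − c(q_i). A profile (q₁,…,q_N) is a pure-strategy Nash equilibrium of this game if and only if there exists a player i with q_i = q^M and q_j = 0 for all j ≠ i. -/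
open MeasureTheory Set Filter Topology

noncomputable section

/-- The payoff of firm `i` in the production game. -/
def pay (F g c : ℝ → ℝ) {N : ℕ} (qv : Fin N → ℝ) (i : Fin N) : ℝ :=
  max (Vval F g (qv i) - Vval F g (sSup (qv '' {j | j ≠ i}))) 0 - c (qv i)


section Stmt15Aux

variable {F g : ℝ → ℝ}

lemma stmt15_zero_mem (hg : g 0 = 0) {qcap : ℝ} (hq : 0 ≤ qcap) :
    (0:ℝ) ∈ {v | ∃ q : ℝ → ℝ, FeasibleCap qcap q ∧ v = virtSurplus F g q} := by
  refine ⟨fun _ => 0, ⟨⟨measurable_const, fun _ _ => le_refl 0⟩,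
    monotoneOn_const, fun _ _ => hq⟩, ?_⟩
  simp [virtSurplus, hg]

lemma stmt15_phi_bound (hF : ContDiff ℝ 2 F) (hFpos : ∀ θ ∈ Icc (0:ℝ) 1, 0 < deriv F θ) :
    ∃ M : ℝ, 0 ≤ M ∧ ∀ θ ∈ Icc (0:ℝ) 1, |phi F θ| ≤ M := by
  have hF' : Continuous (deriv F) := hF.continuous_deriv (by norm_num)
  have hc : ContinuousOn (phi F) (Icc (0:ℝ) 1) := by
    apply ContinuousOn.sub continuousOn_id
    exact ContinuousOn.div
      ((continuousOn_const).sub hF.continuous.continuousOn)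
      hF'.continuousOn (fun θ hθ => (hFpos θ hθ).ne')
  obtain ⟨M, hMb⟩ := (isCompact_Icc (a := (0:ℝ)) (b := 1)).exists_bound_of_continuousOn hc
  exact ⟨max M 0, le_max_right _ _, fun θ hθ => le_trans (hMb θ hθ) (le_max_left _ _)⟩

lemma stmt15_bddAbove_set (hF : ContDiff ℝ 2 F) (hFpos : ∀ θ ∈ Icc (0:ℝ) 1, 0 < deriv F θ)
    (hgm : StrictMonoOn g (Ici (0:ℝ))) (qcap : ℝ) :
    BddAbove {v | ∃ q : ℝ → ℝ, FeasibleCap qcap q ∧ v = virtSurplus F g q} := by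
  rcases le_or_gt 0 qcap with hq | hq
  · obtain ⟨M, hM0, hMb⟩ := stmt15_phi_bound hF hFpos
    have hF' : Continuous (deriv F) := hF.continuous_deriv (by norm_num)
    set K : ℝ := g qcap + M * qcap with hK
    refine ⟨max 0 (∫ θ in (0:ℝ)..1, K * deriv F θ), ?_⟩
    rintro v ⟨qt, ⟨⟨_, hpos⟩, _, hcap⟩, rfl⟩
    by_cases hi : IntervalIntegrable
        (fun θ => (g (qt θ) + phi F θ * qt θ) * deriv F θ) volume 0 1
    · refine le_trans ?_ (le_max_right _ _)
      apply intervalIntegral.integral_mono_on (by norm_num) hi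
        ((continuous_const.mul hF').intervalIntegrable 0 1)
      intro θ hθ
      have h0 := hpos θ hθ
      have h1 := hcap θ hθ
      have h2 := hFpos θ hθ
      have hg1 : g (qt θ) ≤ g qcap :=
        hgm.monotoneOn (mem_Ici.mpr h0) (mem_Ici.mpr hq) h1
      have hg2 : phi F θ * qt θ ≤ M * qcap := by
        calc phi F θ * qt θ ≤ M * qt θ :=
              mul_le_mul_of_nonneg_right ((abs_le.mp (hMb θ hθ)).2) h0
          _ ≤ M * qcap := mul_le_mul_of_nonneg_left h1 hM0
      exact mul_le_mul_of_nonneg_right (add_le_add hg1 hg2) h2.le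
    · rw [virtSurplus, intervalIntegral.integral_undef hi]
      exact le_max_left _ _
  · refine ⟨0, ?_⟩
    rintro v ⟨qt, ⟨⟨_, hpos⟩, _, hcap⟩, rfl⟩
    exact absurd (lt_of_le_of_lt (le_trans (hpos 0 (by norm_num)) (hcap 0 (by norm_num))) hq)
      (lt_irrefl 0)

lemma stmt15_Vval_nonneg (hF : ContDiff ℝ 2 F) (hFpos : ∀ θ ∈ Icc (0:ℝ) 1, 0 < deriv F θ)
    (hgm : StrictMonoOn g (Ici (0:ℝ))) (hg : g 0 = 0) {qcap : ℝ} (hq : 0 ≤ qcap) :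
    0 ≤ Vval F g qcap :=
  le_csSup (stmt15_bddAbove_set hF hFpos hgm qcap) (stmt15_zero_mem hg hq)

lemma stmt15_Vval_zero (hF : ContDiff ℝ 2 F) (hFpos : ∀ θ ∈ Icc (0:ℝ) 1, 0 < deriv F θ)
    (hgm : StrictMonoOn g (Ici (0:ℝ))) (hg : g 0 = 0) :
    Vval F g 0 = 0 := by
  refine le_antisymm (csSup_le ⟨0, stmt15_zero_mem hg le_rfl⟩ ?_)
    (stmt15_Vval_nonneg hF hFpos hgm hg le_rfl)
  rintro v ⟨qt, ⟨⟨_, hpos⟩, _, hcap⟩, rfl⟩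
  rw [virtSurplus, show (∫ θ in (0:ℝ)..1, (g (qt θ) + phi F θ * qt θ) * deriv F θ)
      = ∫ θ in (0:ℝ)..1, (0:ℝ) from ?_]
  · simp
  · apply intervalIntegral.integral_congr
    intro θ hθ
    rw [uIcc_of_le (by norm_num : (0:ℝ) ≤ 1)] at hθ
    have : qt θ = 0 := le_antisymm (hcap θ hθ) (hpos θ hθ)
    simp [this, hg]

lemma stmt15_Vval_mono (hF : ContDiff ℝ 2 F) (hFpos : ∀ θ ∈ Icc (0:ℝ) 1, 0 < deriv F θ)
    (hgm : StrictMonoOn g (Ici (0:ℝ))) (hg : g 0 = 0) {a b : ℝ} (ha : 0 ≤ a) (hab : a ≤ b) :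
    Vval F g a ≤ Vval F g b := by
  apply csSup_le_csSup (stmt15_bddAbove_set hF hFpos hgm b) ⟨0, stmt15_zero_mem hg ha⟩
  rintro v ⟨qt, ⟨hA, hm, hcap⟩, rfl⟩
  exact ⟨qt, ⟨hA, hm, fun θ hθ => (hcap θ hθ).trans hab⟩, rfl⟩

end Stmt15Aux

/-- pure-strategy equilibria of the production game. A profile of
nonnegative qualities is a pure-strategy Nash equilibrium iff one player chooses `q^M`
and all others choose `0`. -/
theorem stmt15 (F g c : ℝ → ℝ) (hM : MainModel F g c)
    (N : ℕ) (hN : 2 ≤ N)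
    (qM : ℝ)
    (hqM : 0 ≤ qM ∧
      (∀ q : ℝ, 0 ≤ q → Vval F g q - c q ≤ Vval F g qM - c qM) ∧
      ∀ q : ℝ, 0 ≤ q →
        (∀ q' : ℝ, 0 ≤ q' → Vval F g q' - c q' ≤ Vval F g q - c q) → q = qM)
    (qv : Fin N → ℝ) :
    ((∀ i, 0 ≤ qv i) ∧
      ∀ i : Fin N, ∀ q' : ℝ, 0 ≤ q' →
        pay F g c (Function.update qv i q') i ≤ pay F g c qv i) ↔
      ∃ i : Fin N, qv i = qM ∧ ∀ j : Fin N, j ≠ i → qv j = 0 := by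
  obtain ⟨hqM0, hqMmax, hqMuniq⟩ := hqM
  have hF := hM.F_smooth
  have hFpos := hM.F_density_pos
  have hgm := hM.g_mono
  have hg0 := hM.g_zero
  have hcmono := hM.c_mono
  have W0 : Vval F g 0 = 0 := stmt15_Vval_zero hF hFpos hgm hg0
  have Wnn : ∀ {q : ℝ}, 0 ≤ q → 0 ≤ Vval F g q :=
    fun hq => stmt15_Vval_nonneg hF hFpos hgm hg0 hq
  have Wmono : ∀ {a b : ℝ}, 0 ≤ a → a ≤ b → Vval F g a ≤ Vval F g b :=
    fun ha hab => stmt15_Vval_mono hF hFpos hgm hg0 ha hab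
  haveI : Nontrivial (Fin N) := Fin.nontrivial_iff_two_le.mpr hN
  have himgfin : ∀ i : Fin N, BddAbove (qv '' {j | j ≠ i}) :=
    fun i => ((Set.toFinite {j | j ≠ i}).image qv).bddAbove
  have himg : ∀ (i : Fin N) (q' : ℝ),
      (Function.update qv i q') '' {j | j ≠ i} = qv '' {j | j ≠ i} := by
    intro i q'
    apply Set.image_congr
    intro j hj
    exact Function.update_of_ne hj q' qv
  have hpayupd : ∀ (i : Fin N) (q' : ℝ),
      pay F g c (Function.update qv i q') i
        = max (Vval F g q' - Vval F g (sSup (qv '' {j | j ≠ i}))) 0 - c q' := by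
    intro i q'
    rw [pay, himg i q', Function.update_self]
  have hsup0 : ∀ i : Fin N, (∀ j, j ≠ i → qv j = 0) → sSup (qv '' {k | k ≠ i}) = 0 := by
    intro i h
    obtain ⟨k, hk⟩ := exists_ne i
    have hne : (qv '' {m | m ≠ i}).Nonempty := ⟨qv k, k, hk, rfl⟩
    apply le_antisymm
    · apply csSup_le hne
      rintro x ⟨m, hm, rfl⟩
      exact le_of_eq (h m hm)
    · exact le_csSup (himgfin i) ⟨k, hk, h k hk⟩
  constructor
  · rintro ⟨hpos, hNE⟩
    have key : ∀ j : Fin N, 0 < qv j →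
        Vval F g (sSup (qv '' {k | k ≠ j})) < Vval F g (qv j) := by
      intro j hj
      have h := hNE j 0 le_rfl
      rw [hpayupd j 0, pay, W0] at h
      have hsnn : 0 ≤ sSup (qv '' {k | k ≠ j}) := by
        obtain ⟨k, hk⟩ := exists_ne j
        exact le_trans (hpos k) (le_csSup (himgfin j) ⟨k, hk, rfl⟩)
      rw [max_eq_right (by linarith [Wnn hsnn] :
          (0:ℝ) - Vval F g (sSup (qv '' {k | k ≠ j})) ≤ 0)] at h
      have hc : c 0 < c (qv j) :=
        hcmono (mem_Ici.mpr le_rfl) (mem_Ici.mpr hj.le) hj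
      by_contra hcon
      push_neg at hcon
      rw [max_eq_right (sub_nonpos.mpr hcon)] at h
      linarith
    have uniq : ∀ j k : Fin N, j ≠ k → 0 < qv j → 0 < qv k → False := by
      intro j k hjk hj hk
      have h1 := key j hj
      have h2 := key k hk
      have h3 : Vval F g (qv k) ≤ Vval F g (sSup (qv '' {m | m ≠ j})) :=
        Wmono (hpos k) (le_csSup (himgfin j) ⟨k, Ne.symm hjk, rfl⟩)
      have h4 : Vval F g (qv j) ≤ Vval F g (sSup (qv '' {m | m ≠ k})) :=
        Wmono (hpos j) (le_csSup (himgfin k) ⟨j, hjk, rfl⟩)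
      linarith
    by_cases hall : ∀ j, qv j = 0
    · have i : Fin N := ⟨0, by omega⟩
      have hs : sSup (qv '' {k | k ≠ i}) = 0 := hsup0 i (fun j _ => hall j)
      have hmax0 : ∀ q' : ℝ, 0 ≤ q' → Vval F g q' - c q' ≤ Vval F g 0 - c 0 := by
        intro q' hq'
        have h := hNE i q' hq'
        rw [hpayupd i q', pay, hs, W0, hall i, W0, sub_zero, sub_zero,
          max_eq_left (Wnn hq'), max_eq_left le_rfl] at h
        rw [W0]
        exact h
      have h0M : (0:ℝ) = qM := hqMuniq 0 le_rfl hmax0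
      exact ⟨i, by rw [hall i, h0M], fun j _ => hall j⟩
    · push_neg at hall
      obtain ⟨i, hi0⟩ := hall
      have hipos : 0 < qv i := lt_of_le_of_ne (hpos i) (Ne.symm hi0)
      have hoth : ∀ j, j ≠ i → qv j = 0 := by
        intro j hj
        by_contra hj0
        exact uniq j i hj (lt_of_le_of_ne (hpos j) (Ne.symm hj0)) hipos
      have hs : sSup (qv '' {k | k ≠ i}) = 0 := hsup0 i hoth
      have hmax : ∀ q' : ℝ, 0 ≤ q' → Vval F g q' - c q' ≤ Vval F g (qv i) - c (qv i) := by
        intro q' hq'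
        have h := hNE i q' hq'
        rw [hpayupd i q', pay, hs, W0, sub_zero, sub_zero,
          max_eq_left (Wnn hq'), max_eq_left (Wnn (hpos i))] at h
        exact h
      exact ⟨i, hqMuniq (qv i) (hpos i) hmax, hoth⟩
  · rintro ⟨i, hqi, hoth⟩
    have hposall : ∀ j, 0 ≤ qv j := by
      intro j
      by_cases hj : j = i
      · rw [hj, hqi]; exact hqM0
      · rw [hoth j hj]
    refine ⟨hposall, ?_⟩
    intro j q' hq'
    by_cases hj : j = i
    · subst hj
      have hs : sSup (qv '' {k | k ≠ j}) = 0 := hsup0 j hoth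
      rw [hpayupd j q', pay, hs, W0, sub_zero, sub_zero,
        max_eq_left (Wnn hq'), hqi, max_eq_left (Wnn hqM0)]
      exact hqMmax q' hq'
    · have hqvj : qv j = 0 := hoth j hj
      have hs : sSup (qv '' {k | k ≠ j}) = qM := by
        obtain ⟨k, hk⟩ := exists_ne j
        have hne : (qv '' {m | m ≠ j}).Nonempty := ⟨qv k, k, hk, rfl⟩
        apply le_antisymm
        · apply csSup_le hne
          rintro x ⟨m, hm, rfl⟩
          by_cases hm' : m = i
          · rw [hm', hqi]
          · rw [hoth m hm']; exact hqM0
        · exact le_csSup (himgfin j) ⟨i, Ne.symm hj, hqi⟩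
      rw [hpayupd j q', pay, hs, hqvj, W0,
        max_eq_right (by linarith [Wnn hqM0] : (0:ℝ) - Vval F g qM ≤ 0)]
      rcases le_or_gt (Vval F g q') (Vval F g qM) with h | h
      · rw [max_eq_right (sub_nonpos.mpr h)]
        have : c 0 ≤ c q' :=
          hcmono.monotoneOn (mem_Ici.mpr le_rfl) (mem_Ici.mpr hq') hq'
        linarith
      · rw [max_eq_left (by linarith)]
        have h1 := hqMmax q' hq'
        have h2 : c 0 ≤ c qM :=
          hcmono.monotoneOn (mem_Ici.mpr le_rfl) (mem_Ici.mpr hqM0) hqM0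
        linarith
end
end

section
/- For n ≥ 2, let X_n and Y_n be the first- and second-order statistics of n i.i.d. draws from the distribution H_n with H_n(q) = (c'(q)/V'(q))^{1/(n−1)} on [0,q^M] and H_n(q)=1 above. Define the expected equilibrium welfare W_n = E[ ∫_Θ r(X_n, Y_n, θ) dF(θ) ], where r(x,y,θ) = ∫_{[0,θ]} max{min{β(s), x}, y} ds is the information rent of type θ under the competitive allocation with highest cap x and second-highest cap y. Then W_{n+1} ≤ W_n for every n ≥ 2. -/
open MeasureTheory Set Filter Topology

noncomputable section

/-- First-order statistic (maximum) of a finite profile. -/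
def Xstat {n : ℕ} (v : Fin n → ℝ) : ℝ := sSup (range v)

/-- Second-order statistic of a finite profile: `max_{i ≠ j} min (v i) (v j)`. -/
def Ystat {n : ℕ} (v : Fin n → ℝ) : ℝ :=
  sSup {m | ∃ i j : Fin n, i ≠ j ∧ m = min (v i) (v j)}

/-- Information rent of type `θ` under the competitive allocation with highest cap `x`
and second-highest cap `y`: `r(x,y,θ) = ∫_0^θ max{min{β(s), x}, y} ds`. -/
def rent (βe : ℝ → EReal) (x y θ : ℝ) : ℝ :=
  ∫ s in (0:ℝ)..θ, max ((min (βe s) (x : EReal)).toReal) y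

/-- Expected equilibrium welfare with `n` active firms drawing caps i.i.d. from `μn`. -/
def eqWelfare (F : ℝ → ℝ) (βe : ℝ → EReal) (μn : Measure ℝ) (n : ℕ) : ℝ :=
  ∫ v : Fin n → ℝ,
    (∫ θ in (0:ℝ)..1, rent βe (Xstat v) (Ystat v) θ * deriv F θ)
    ∂(Measure.pi fun _ : Fin n => μn)
/-! Write `ρ(x, θ) = ∫₀^θ min (β s) x ds`. For `y ≤ x` the identity
`max (min β x) y = min β x + y - min β y` gives `r(x, y, θ) = ρ(x, θ) + θ y - ρ(y, θ)`, so the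
welfare of a profile of caps is `A (X) + B (Y)` with `A(x) = E_F ρ(x, θ)` and
`B(y) = E_F[θ] y - A(y)`; both are increasing, the second because `min β x` grows at rate at most
one in `x`. It therefore suffices that the first- and second-order statistics become
stochastically smaller from `n` to `n + 1` firms. With `H_n = R^(1/(n-1))` the distribution
functions satisfy `H_n^(n-1) = H_{n+1}^n`. This forces `H_n ≤ H_{n+1}`, whence
`H_n^n ≤ H_{n+1}^(n+1)`; for the second-order statistic the comparison reduces to
`n b ≤ 1 + (n - 1) a` for `a = H_n`, `b = H_{n+1}`, which is AM-GM for `b = (1 · a^(n-1))^(1/n)`. -/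

open Function

theorem IsLowerSet.eq_empty_or_univ_or_Iic_or_Iio {α : Type*}
    [ConditionallyCompleteLinearOrder α] {L : Set α} (hL : IsLowerSet L) :
    L = ∅ ∨ L = univ ∨ ∃ a, L = Iic a ∨ L = Iio a := by
  rcases L.eq_empty_or_nonempty with hempty | hne
  · exact Or.inl hempty
  by_cases hbdd : BddAbove L
  · have hlub := isLUB_csSup hne hbdd
    have hunion : ⋃ x ∈ L, Iic x = L :=
      Subset.antisymm (iUnion₂_subset fun _ hx => hL.Iic_subset hx) fun x hx =>
        mem_iUnion₂.2 ⟨x, hx, self_mem_Iic⟩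
    refine Or.inr <| Or.inr ⟨sSup L, ?_⟩
    by_cases hmem : sSup L ∈ L
    · exact Or.inl (hunion.symm.trans (hlub.biUnion_Iic_eq_Iic hmem))
    · exact Or.inr (hunion.symm.trans (hlub.biUnion_Iic_eq_Iio hmem))
  · refine Or.inr <| Or.inl <| eq_univ_of_forall fun x => ?_
    obtain ⟨y, hy, hxy⟩ := not_bddAbove_iff.1 hbdd x
    exact hL hxy.le hy

section StochasticDominance

variable {ν₁ ν₂ : Measure ℝ}

lemma measure_Iio_le_of_forall_measure_Iic_le (hdom : ∀ q, ν₁ (Iic q) ≤ ν₂ (Iic q)) (a : ℝ) :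
    ν₁ (Iio a) ≤ ν₂ (Iio a) := by
  have hlim : Tendsto (fun k : ℕ => a - 1 / ((k : ℝ) + 1)) atTop (𝓝 a) := by
    simpa using tendsto_one_div_add_atTop_nhds_zero_nat.const_sub a
  have hmono : Monotone fun k : ℕ => Iic (a - 1 / ((k : ℝ) + 1)) := fun _ _ hkl =>
    Iic_subset_Iic.2 (sub_le_sub_left (Nat.one_div_le_one_div hkl) a)
  rw [← iUnion_Iic_eq_Iio_of_lt_of_tendsto (fun k => sub_lt_self a Nat.one_div_pos_of_nat) hlim,
    hmono.measure_iUnion, hmono.measure_iUnion]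
  exact iSup_mono fun k => hdom _

lemma measure_le_of_isLowerSet (hdom : ∀ q, ν₁ (Iic q) ≤ ν₂ (Iic q)) {L : Set ℝ}
    (hL : IsLowerSet L) : ν₁ L ≤ ν₂ L := by
  rcases hL.eq_empty_or_univ_or_Iic_or_Iio with rfl | rfl | ⟨a, rfl | rfl⟩
  · simp
  · rw [← iUnion_Iic, monotone_Iic.measure_iUnion, monotone_Iic.measure_iUnion]
    exact iSup_mono hdom
  · exact hdom a
  · exact measure_Iio_le_of_forall_measure_Iic_le hdom a

lemma measure_le_of_isUpperSet [IsProbabilityMeasure ν₁] [IsProbabilityMeasure ν₂]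
    (hdom : ∀ q, ν₁ (Iic q) ≤ ν₂ (Iic q)) {U : Set ℝ} (hU : IsUpperSet U) : ν₂ U ≤ ν₁ U := by
  have hmeas : MeasurableSet Uᶜ := hU.compl.ordConnected.measurableSet
  rw [← compl_compl U, prob_compl_eq_one_sub hmeas, prob_compl_eq_one_sub hmeas]
  exact tsub_le_tsub_left (measure_le_of_isLowerSet hdom hU.compl) 1

lemma lintegral_ofReal_le_of_measure_lt_le {α : Type*} [MeasurableSpace α] {μ ν : Measure α}
    {g : α → ℝ} (hg : 0 ≤ g) (hgm : Measurable g)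
    (h : ∀ t, μ {x | t < g x} ≤ ν {x | t < g x}) :
    ∫⁻ x, ENNReal.ofReal (g x) ∂μ ≤ ∫⁻ x, ENNReal.ofReal (g x) ∂ν := by
  rw [lintegral_eq_lintegral_meas_lt μ (ae_of_all _ hg) hgm.aemeasurable,
    lintegral_eq_lintegral_meas_lt ν (ae_of_all _ hg) hgm.aemeasurable]
  exact lintegral_mono fun t => h t

/-- The positive part of `f` is compared through its upper level sets and the negative part
through its lower level sets (layer-cake formula). -/
theorem integral_le_integral_of_forall_measure_Iic_le [IsProbabilityMeasure ν₁]
    [IsProbabilityMeasure ν₂] (hdom : ∀ q, ν₁ (Iic q) ≤ ν₂ (Iic q)) {f : ℝ → ℝ}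
    (hf : Monotone f) (hf₁ : Integrable f ν₁) (hf₂ : Integrable f ν₂) :
    ∫ x, f x ∂ν₂ ≤ ∫ x, f x ∂ν₁ := by
  have hpos : ∫⁻ x, ENNReal.ofReal (f x) ∂ν₂ ≤ ∫⁻ x, ENNReal.ofReal (f x) ∂ν₁ := by
    simpa using lintegral_ofReal_le_of_measure_lt_le (g := fun x => max (f x) 0)
      (fun _ => le_max_right _ _) (hf.measurable.max measurable_const)
      fun t => measure_le_of_isUpperSet hdom ((isUpperSet_Ioi t).preimage (hf.max monotone_const))
  have hneg : ∫⁻ x, ENNReal.ofReal (-f x) ∂ν₁ ≤ ∫⁻ x, ENNReal.ofReal (-f x) ∂ν₂ := by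
    have := lintegral_ofReal_le_of_measure_lt_le (g := fun x => max (-f x) 0)
      (fun _ => le_max_right _ _) (hf.measurable.neg.max measurable_const)
      fun t => measure_le_of_isLowerSet hdom fun _ _ hxy hy =>
        hy.trans_le (max_le_max (neg_le_neg (hf hxy)) le_rfl)
    simpa using this
  rw [integral_eq_lintegral_pos_part_sub_lintegral_neg_part hf₁,
    integral_eq_lintegral_pos_part_sub_lintegral_neg_part hf₂]
  gcongr
  · exact hf₁.lintegral_lt_top.ne
  · exact hf₂.neg.lintegral_lt_top.ne

theorem integral_comp_le_of_forall_measureReal_preimage_Iic_le {Ω₁ Ω₂ : Type*}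
    [MeasurableSpace Ω₁] [MeasurableSpace Ω₂] {P₁ : Measure Ω₁} {P₂ : Measure Ω₂}
    [IsProbabilityMeasure P₁] [IsProbabilityMeasure P₂] {X₁ : Ω₁ → ℝ} {X₂ : Ω₂ → ℝ}
    (hX₁ : Measurable X₁) (hX₂ : Measurable X₂)
    (hdom : ∀ q, P₁.real (X₁ ⁻¹' Iic q) ≤ P₂.real (X₂ ⁻¹' Iic q)) {f : ℝ → ℝ}
    (hf : Monotone f) (hf₁ : Integrable (fun ω => f (X₁ ω)) P₁)
    (hf₂ : Integrable (fun ω => f (X₂ ω)) P₂) :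
    ∫ ω, f (X₂ ω) ∂P₂ ≤ ∫ ω, f (X₁ ω) ∂P₁ := by
  have := Measure.isProbabilityMeasure_map (μ := P₁) hX₁.aemeasurable
  have := Measure.isProbabilityMeasure_map (μ := P₂) hX₂.aemeasurable
  have hfm := hf.measurable
  rw [← integral_map hX₂.aemeasurable hfm.aestronglyMeasurable,
    ← integral_map hX₁.aemeasurable hfm.aestronglyMeasurable]
  refine integral_le_integral_of_forall_measure_Iic_le (fun q => ?_) hf
    ((integrable_map_measure hfm.aestronglyMeasurable hX₁.aemeasurable).2 hf₁)
    ((integrable_map_measure hfm.aestronglyMeasurable hX₂.aemeasurable).2 hf₂)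
  rw [Measure.map_apply hX₁ measurableSet_Iic, Measure.map_apply hX₂ measurableSet_Iic]
  exact (ENNReal.toReal_le_toReal (measure_ne_top _ _) (measure_ne_top _ _)).1 (hdom q)

end StochasticDominance

theorem Monotone.integrable_comp_of_ae_mem_Icc {Ω : Type*} [MeasurableSpace Ω] {P : Measure Ω}
    [IsFiniteMeasure P] {f : ℝ → ℝ} (hf : Monotone f) {X : Ω → ℝ} (hX : Measurable X)
    {a b : ℝ} (h : ∀ᵐ ω ∂P, X ω ∈ Icc a b) : Integrable (fun ω => f (X ω)) P :=
  Integrable.of_bound (hf.measurable.comp hX).aestronglyMeasurable (max |f a| |f b|)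
    (h.mono fun _ hω => abs_le_max_abs_abs (hf hω.1) (hf hω.2))

lemma ae_mem_Icc_of_measureReal_Iic {μ : Measure ℝ} [IsProbabilityMeasure μ] {a b : ℝ}
    (ha : μ.real (Iic a) = 0) (hb : μ.real (Iic b) = 1) : ∀ᵐ x ∂μ, x ∈ Icc a b := by
  have hlow : ∀ᵐ x ∂μ, x ∉ Iic a :=
    measure_eq_zero_iff_ae_notMem.1 ((measureReal_eq_zero_iff).1 ha)
  have hhigh : ∀ᵐ x ∂μ, x ∉ (Iic b)ᶜ := by
    refine measure_eq_zero_iff_ae_notMem.1 ((measureReal_eq_zero_iff).1 ?_)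
    rw [probReal_compl_eq_one_sub measurableSet_Iic, hb, sub_self]
  filter_upwards [hlow, hhigh] with x hxa hxb
  simp only [mem_Iic, not_le, mem_compl_iff, not_lt] at hxa hxb
  exact ⟨hxa.le, hxb⟩

lemma ae_forall_mem_of_ae_mem {ι α : Type*} [Fintype ι] [MeasurableSpace α] {μ : Measure α}
    [SigmaFinite μ] {s : Set α} (h : ∀ᵐ x ∂μ, x ∈ s) : ∀ᵐ v ∂Measure.pi (fun _ : ι => μ), ∀ i, v i ∈ s :=
  ae_all_iff.2 fun _ => Measure.tendsto_eval_ae_ae.eventually h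

section OrderStatistics

variable {n : ℕ}

lemma le_Xstat (v : Fin n → ℝ) (i : Fin n) : v i ≤ Xstat v :=
  le_csSup (finite_range v).bddAbove ⟨i, rfl⟩

lemma Xstat_le_iff (hn : 0 < n) {v : Fin n → ℝ} {q : ℝ} : Xstat v ≤ q ↔ ∀ i, v i ≤ q := by
  have : Nonempty (Fin n) := ⟨⟨0, hn⟩⟩
  simp [Xstat, csSup_le_iff (finite_range v).bddAbove (range_nonempty v)]

lemma finite_Ystat_set (v : Fin n → ℝ) :
    {m | ∃ i j : Fin n, i ≠ j ∧ m = min (v i) (v j)}.Finite :=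
  ((finite_range fun p : Fin n × Fin n => min (v p.1) (v p.2)).subset
    fun _ ⟨i, j, _, hm⟩ => ⟨(i, j), hm.symm⟩)

lemma min_le_Ystat (v : Fin n → ℝ) {i j : Fin n} (hij : i ≠ j) :
    min (v i) (v j) ≤ Ystat v :=
  le_csSup (finite_Ystat_set v).bddAbove ⟨i, j, hij, rfl⟩

lemma Ystat_le_iff (hn : 2 ≤ n) {v : Fin n → ℝ} {q : ℝ} :
    Ystat v ≤ q ↔ ∀ i j : Fin n, i ≠ j → min (v i) (v j) ≤ q := by
  have hne : {m | ∃ i j : Fin n, i ≠ j ∧ m = min (v i) (v j)}.Nonempty :=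
    ⟨_, ⟨0, by omega⟩, ⟨1, by omega⟩, by simp [Fin.ext_iff], rfl⟩
  rw [Ystat, csSup_le_iff (finite_Ystat_set v).bddAbove hne]
  exact ⟨fun h i j hij => h _ ⟨i, j, hij, rfl⟩, fun h _ ⟨i, j, hij, hm⟩ => hm ▸ h i j hij⟩

lemma Ystat_le_Xstat (hn : 2 ≤ n) (v : Fin n → ℝ) : Ystat v ≤ Xstat v :=
  (Ystat_le_iff hn).2 fun i _ _ => (min_le_left _ _).trans (le_Xstat v i)

lemma Xstat_mem_Icc (hn : 0 < n) {v : Fin n → ℝ} {a b : ℝ} (hv : ∀ i, v i ∈ Icc a b) :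
    Xstat v ∈ Icc a b :=
  ⟨(hv ⟨0, hn⟩).1.trans (le_Xstat v _), (Xstat_le_iff hn).2 fun i => (hv i).2⟩

lemma Ystat_mem_Icc (hn : 2 ≤ n) {v : Fin n → ℝ} {a b : ℝ} (hv : ∀ i, v i ∈ Icc a b) :
    Ystat v ∈ Icc a b :=
  ⟨(le_min (hv _).1 (hv _).1).trans
      (min_le_Ystat v (i := ⟨0, by omega⟩) (j := ⟨1, by omega⟩) (by simp [Fin.ext_iff])),
    (Ystat_le_iff hn).2 fun i _ _ => (min_le_left _ _).trans (hv i).2⟩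

lemma Xstat_preimage_Iic (hn : 0 < n) (q : ℝ) :
    Xstat ⁻¹' Iic q = univ.pi fun _ : Fin n => Iic q := by
  ext v
  simp only [mem_preimage, mem_Iic, Xstat_le_iff hn, mem_univ_pi]

lemma Ystat_preimage_Iic (hn : 2 ≤ n) (q : ℝ) :
    Ystat ⁻¹' Iic q = (univ.pi fun _ : Fin n => Iic q) ∪
      ⋃ i : Fin n, univ.pi fun j => if j = i then Ioi q else Iic q := by
  ext v
  simp only [mem_preimage, mem_Iic, Ystat_le_iff hn, mem_union, mem_univ_pi, mem_iUnion]
  constructor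
  · intro h
    by_cases hall : ∀ i, v i ≤ q
    · exact Or.inl hall
    push Not at hall
    obtain ⟨i, hi⟩ := hall
    refine Or.inr ⟨i, fun j => ?_⟩
    split_ifs with hj
    · exact hj ▸ hi
    · simpa [min_le_iff, hi.not_ge] using h j i hj
  · rintro (hall | ⟨i, hi⟩) k l hkl
    · exact (min_le_left _ _).trans (hall k)
    · by_cases hk : k = i
      · have hl : l ≠ i := fun h => hkl (hk.trans h.symm)
        exact (min_le_right _ _).trans (by simpa [hl] using hi l)
      · exact (min_le_left _ _).trans (by simpa [hk] using hi k)

lemma measurable_Xstat (hn : 0 < n) : Measurable (Xstat : (Fin n → ℝ) → ℝ) :=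
  measurable_of_Iic fun q => Xstat_preimage_Iic hn q ▸
    MeasurableSet.univ_pi fun _ => measurableSet_Iic

lemma measurableSet_pi_ite_Ioi_Iic (i : Fin n) (q : ℝ) :
    MeasurableSet (univ.pi fun j => if j = i then Ioi q else Iic q) :=
  MeasurableSet.univ_pi fun j => by split_ifs <;> simp

lemma measurable_Ystat (hn : 2 ≤ n) : Measurable (Ystat : (Fin n → ℝ) → ℝ) :=
  measurable_of_Iic fun q => Ystat_preimage_Iic hn q ▸
    (MeasurableSet.univ_pi fun _ => measurableSet_Iic).union
      (MeasurableSet.iUnion fun i => measurableSet_pi_ite_Ioi_Iic i q)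

variable (μ : Measure ℝ) [IsProbabilityMeasure μ]

lemma measureReal_pi_univ_pi (s : Fin n → Set ℝ) :
    (Measure.pi fun _ : Fin n => μ).real (univ.pi s) = ∏ i, μ.real (s i) := by
  simp [Measure.real, Measure.pi_pi, ENNReal.toReal_prod]

lemma measureReal_Xstat_preimage_Iic (hn : 0 < n) (q : ℝ) :
    (Measure.pi fun _ : Fin n => μ).real (Xstat ⁻¹' Iic q) = μ.real (Iic q) ^ n := by
  simp only [Xstat_preimage_Iic hn, measureReal_pi_univ_pi, Finset.prod_const, Finset.card_univ,
    Fintype.card_fin]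

lemma measureReal_Ystat_preimage_Iic (hn : 2 ≤ n) (q : ℝ) :
    (Measure.pi fun _ : Fin n => μ).real (Ystat ⁻¹' Iic q) =
      μ.real (Iic q) ^ n + n * ((1 - μ.real (Iic q)) * μ.real (Iic q) ^ (n - 1)) := by
  have hdisj : Pairwise (Disjoint on fun i : Fin n =>
      univ.pi fun j => if j = i then Ioi q else Iic q) := by
    intro i k hik
    refine disjoint_left.2 fun v hv hv' => ?_
    have h1 : q < v i := by simpa using hv i (mem_univ i)
    have h2 : v i ≤ q := by simpa [hik] using hv' i (mem_univ i)
    exact h1.not_ge h2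
  have hdisj' : Disjoint (univ.pi fun _ : Fin n => Iic q)
      (⋃ i : Fin n, univ.pi fun j => if j = i then Ioi q else Iic q) := by
    refine disjoint_iUnion_right.2 fun i => disjoint_left.2 fun v hv hv' => ?_
    have h1 : v i ≤ q := hv i (mem_univ i)
    have h2 : q < v i := by simpa using hv' i (mem_univ i)
    exact h2.not_ge h1
  rw [Ystat_preimage_Iic hn, measureReal_union hdisj'
      (MeasurableSet.iUnion fun i => measurableSet_pi_ite_Ioi_Iic i q),
    measureReal_iUnion_fintype hdisj fun i => measurableSet_pi_ite_Ioi_Iic i q]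
  simp only [measureReal_pi_univ_pi]
  simp [apply_ite, Finset.prod_ite, Finset.filter_ne', Finset.filter_eq', ← compl_Iic,
    probReal_compl_eq_one_sub]

variable {μ}

lemma integrable_comp_Xstat (hn : 0 < n) {a b : ℝ} (h : ∀ᵐ x ∂μ, x ∈ Icc a b) {f : ℝ → ℝ}
    (hf : Monotone f) : Integrable (fun v => f (Xstat v)) (Measure.pi fun _ : Fin n => μ) :=
  hf.integrable_comp_of_ae_mem_Icc (measurable_Xstat hn)
    ((ae_forall_mem_of_ae_mem h).mono fun _ hv => Xstat_mem_Icc hn hv)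

lemma integrable_comp_Ystat (hn : 2 ≤ n) {a b : ℝ} (h : ∀ᵐ x ∂μ, x ∈ Icc a b) {f : ℝ → ℝ}
    (hf : Monotone f) : Integrable (fun v => f (Ystat v)) (Measure.pi fun _ : Fin n => μ) :=
  hf.integrable_comp_of_ae_mem_Icc (measurable_Ystat hn)
    ((ae_forall_mem_of_ae_mem h).mono fun _ hv => Ystat_mem_Icc hn hv)

end OrderStatistics

section PowerInequalities

variable {n : ℕ} {a b : ℝ}

lemma pow_le_pow_succ_of_pow_pred_eq (hn : 2 ≤ n) (hb : 0 ≤ b) (hb1 : b ≤ 1)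
    (hab : a ^ (n - 1) = b ^ n) : a ^ n ≤ b ^ (n + 1) := by
  have hle : a ≤ b := by
    by_contra! h
    have h1 : b ^ (n - 1) < a ^ (n - 1) := pow_lt_pow_left₀ h hb (by omega)
    have h2 : b ^ n ≤ b ^ (n - 1) := pow_le_pow_of_le_one hb hb1 (by omega)
    linarith
  calc a ^ n = a * a ^ (n - 1) := by rw [← pow_succ', Nat.sub_add_cancel (by omega)]
    _ = a * b ^ n := by rw [hab]
    _ ≤ b * b ^ n := by gcongr
    _ = b ^ (n + 1) := (pow_succ' b n).symm

lemma natCast_mul_le_one_add_of_pow_pred_eq (hn : 2 ≤ n) (ha : 0 ≤ a) (hb : 0 ≤ b)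
    (hab : a ^ (n - 1) = b ^ n) : n * b ≤ 1 + (n - 1) * a := by
  have hn2 : (2 : ℝ) ≤ n := by exact_mod_cast hn
  have hn0 : (0 : ℝ) < n := by positivity
  have hb_eq : b = (1 : ℝ) ^ (1 / (n : ℝ)) * a ^ (((n : ℝ) - 1) / n) := by
    rw [Real.one_rpow, one_mul, ← Real.pow_rpow_inv_natCast hb (by omega : n ≠ 0), ← hab,
      ← Real.rpow_natCast, ← Real.rpow_mul ha, Nat.cast_sub (by omega), div_eq_mul_inv]
    norm_num
  have hamgm := Real.geom_mean_le_arith_mean2_weighted (by positivity)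
    (div_nonneg (by linarith) hn0.le) zero_le_one ha
    (by field_simp; ring : 1 / (n : ℝ) + ((n : ℝ) - 1) / n = 1)
  rw [← hb_eq] at hamgm
  calc (n : ℝ) * b ≤ n * (1 / n * 1 + ((n : ℝ) - 1) / n * a) := by gcongr
    _ = 1 + (n - 1) * a := by field_simp

lemma pow_add_mul_one_sub_le_of_pow_pred_eq (hn : 2 ≤ n) (ha : 0 ≤ a) (hb : 0 ≤ b)
    (hab : a ^ (n - 1) = b ^ n) :
    a ^ n + n * ((1 - a) * a ^ (n - 1)) ≤ b ^ (n + 1) + (n + 1) * ((1 - b) * b ^ n) := by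
  have hkey := natCast_mul_le_one_add_of_pow_pred_eq hn ha hb hab
  have han : a ^ n = a * a ^ (n - 1) := by rw [← pow_succ', Nat.sub_add_cancel (by omega)]
  rw [han, hab, pow_succ']
  nlinarith [mul_le_mul_of_nonneg_left hkey (pow_nonneg hb n)]

end PowerInequalities

namespace EReal

variable {b : EReal}

lemma toReal_min_coe_mono (hb : b ≠ ⊥) {x x' : ℝ} (hx : x ≤ x') :
    (min b x).toReal ≤ (min b x').toReal := by
  induction b using EReal.rec with
  | bot => exact absurd rfl hb
  | coe r => simpa [← coe_strictMono.monotone.map_min] using min_le_min_left r hx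
  | top => simpa using hx

lemma toReal_min_coe_le_add (hb : b ≠ ⊥) {x x' : ℝ} (hx : x ≤ x') :
    (min b x').toReal ≤ (min b x).toReal + (x' - x) := by
  induction b using EReal.rec with
  | bot => exact absurd rfl hb
  | coe r => simp only [← coe_strictMono.monotone.map_min, toReal_coe]; grind
  | top => simp

lemma max_toReal_min_coe (hb : b ≠ ⊥) {x y : ℝ} (hyx : y ≤ x) :
    max (min b x).toReal y = (min b x).toReal + y - (min b y).toReal := by
  induction b using EReal.rec with
  | bot => exact absurd rfl hb
  | coe r => simp only [← coe_strictMono.monotone.map_min, toReal_coe]; grind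
  | top => simp [hyx]

end EReal

section Rent

def capAlloc (βe : ℝ → EReal) (x s : ℝ) : ℝ := (min (βe s) (x : EReal)).toReal

/-- The rent `ρ(x, θ)` of type `θ` under the allocation `min β x`. -/
def cappedRent (βe : ℝ → EReal) (x θ : ℝ) : ℝ := ∫ s in (0:ℝ)..θ, capAlloc βe x s

def expectedCappedRent (F : ℝ → ℝ) (βe : ℝ → EReal) (x : ℝ) : ℝ :=
  ∫ θ in (0:ℝ)..1, cappedRent βe x θ * deriv F θ

def meanType (F : ℝ → ℝ) : ℝ := ∫ θ in (0:ℝ)..1, θ * deriv F θ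

variable {βe : ℝ → EReal}

lemma monotoneOn_capAlloc (hβ : ∀ s ∈ Icc (0:ℝ) 1, βe s ≠ ⊥)
    (hβm : MonotoneOn βe (Icc (0:ℝ) 1)) (x : ℝ) : MonotoneOn (capAlloc βe x) (Icc 0 1) :=
  fun _ hs _ ht hst => EReal.toReal_le_toReal (min_le_min_right _ (hβm hs ht hst))
    (lt_min (bot_lt_iff_ne_bot.2 (hβ _ hs)) (EReal.bot_lt_coe x)).ne'
    (ne_top_of_le_ne_top (EReal.coe_ne_top x) (min_le_right _ _))

lemma intervalIntegrable_capAlloc (hβ : ∀ s ∈ Icc (0:ℝ) 1, βe s ≠ ⊥)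
    (hβm : MonotoneOn βe (Icc (0:ℝ) 1)) (x : ℝ) {θ : ℝ} (hθ : θ ∈ Icc (0:ℝ) 1) :
    IntervalIntegrable (capAlloc βe x) volume 0 θ :=
  ((monotoneOn_capAlloc hβ hβm x).mono (by
    rw [uIcc_of_le hθ.1]; exact Icc_subset_Icc_right hθ.2)).intervalIntegrable

lemma continuousOn_cappedRent (hβ : ∀ s ∈ Icc (0:ℝ) 1, βe s ≠ ⊥)
    (hβm : MonotoneOn βe (Icc (0:ℝ) 1)) (x : ℝ) : ContinuousOn (cappedRent βe x) (Icc 0 1) := by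
  rw [← uIcc_of_le zero_le_one]
  exact intervalIntegral.continuousOn_primitive_interval
    (((monotoneOn_capAlloc hβ hβm x).integrableOn_isCompact isCompact_Icc).mono_set
      (uIcc_of_le zero_le_one).subset)

lemma cappedRent_mono (hβ : ∀ s ∈ Icc (0:ℝ) 1, βe s ≠ ⊥) (hβm : MonotoneOn βe (Icc (0:ℝ) 1))
    {θ : ℝ} (hθ : θ ∈ Icc (0:ℝ) 1) {x x' : ℝ} (hx : x ≤ x') :
    cappedRent βe x θ ≤ cappedRent βe x' θ :=
  intervalIntegral.integral_mono_on hθ.1 (intervalIntegrable_capAlloc hβ hβm x hθ)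
    (intervalIntegrable_capAlloc hβ hβm x' hθ) fun s hs =>
      EReal.toReal_min_coe_mono (hβ s ⟨hs.1, hs.2.trans hθ.2⟩) hx

lemma cappedRent_le_add (hβ : ∀ s ∈ Icc (0:ℝ) 1, βe s ≠ ⊥) (hβm : MonotoneOn βe (Icc (0:ℝ) 1))
    {θ : ℝ} (hθ : θ ∈ Icc (0:ℝ) 1) {x x' : ℝ} (hx : x ≤ x') :
    cappedRent βe x' θ ≤ cappedRent βe x θ + θ * (x' - x) := by
  have h := intervalIntegral.integral_mono_on hθ.1 (intervalIntegrable_capAlloc hβ hβm x' hθ)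
    ((intervalIntegrable_capAlloc hβ hβm x hθ).add intervalIntegrable_const) fun s hs =>
      EReal.toReal_min_coe_le_add (hβ s ⟨hs.1, hs.2.trans hθ.2⟩) hx
  rwa [intervalIntegral.integral_add (intervalIntegrable_capAlloc hβ hβm x hθ)
    intervalIntegrable_const, intervalIntegral.integral_const, sub_zero, smul_eq_mul] at h

lemma rent_eq (hβ : ∀ s ∈ Icc (0:ℝ) 1, βe s ≠ ⊥) (hβm : MonotoneOn βe (Icc (0:ℝ) 1))
    {θ : ℝ} (hθ : θ ∈ Icc (0:ℝ) 1) {x y : ℝ} (hyx : y ≤ x) :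
    rent βe x y θ = cappedRent βe x θ + θ * y - cappedRent βe y θ := by
  have hx := intervalIntegrable_capAlloc hβ hβm x hθ
  have hy := intervalIntegrable_capAlloc hβ hβm y hθ
  rw [rent, intervalIntegral.integral_congr (g := fun s => capAlloc βe x s + y - capAlloc βe y s)
      fun s hs => EReal.max_toReal_min_coe (hβ s ?_) hyx,
    intervalIntegral.integral_sub (hx.add intervalIntegrable_const) hy,
    intervalIntegral.integral_add hx intervalIntegrable_const, intervalIntegral.integral_const,
    sub_zero, smul_eq_mul]
  · rfl
  · rw [uIcc_of_le hθ.1] at hs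
    exact ⟨hs.1, hs.2.trans hθ.2⟩

variable {F : ℝ → ℝ}

lemma intervalIntegrable_cappedRent_mul (hβ : ∀ s ∈ Icc (0:ℝ) 1, βe s ≠ ⊥)
    (hβm : MonotoneOn βe (Icc (0:ℝ) 1)) (hF : ContinuousOn (deriv F) (Icc 0 1)) (x : ℝ) :
    IntervalIntegrable (fun θ => cappedRent βe x θ * deriv F θ) volume 0 1 :=
  ((continuousOn_cappedRent hβ hβm x).mul hF).intervalIntegrable_of_Icc zero_le_one

lemma intervalIntegrable_mul_deriv (hF : ContinuousOn (deriv F) (Icc 0 1)) :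
    IntervalIntegrable (fun θ => θ * deriv F θ) volume 0 1 :=
  (continuousOn_id.mul hF).intervalIntegrable_of_Icc zero_le_one

lemma monotone_expectedCappedRent (hβ : ∀ s ∈ Icc (0:ℝ) 1, βe s ≠ ⊥)
    (hβm : MonotoneOn βe (Icc (0:ℝ) 1)) (hF : ContinuousOn (deriv F) (Icc 0 1))
    (hF0 : ∀ θ ∈ Icc (0:ℝ) 1, 0 ≤ deriv F θ) : Monotone (expectedCappedRent F βe) :=
  fun x x' hx => intervalIntegral.integral_mono_on zero_le_one
    (intervalIntegrable_cappedRent_mul hβ hβm hF x)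
    (intervalIntegrable_cappedRent_mul hβ hβm hF x') fun θ hθ =>
      mul_le_mul_of_nonneg_right (cappedRent_mono hβ hβm hθ hx) (hF0 θ hθ)

lemma monotone_meanType_mul_sub_expectedCappedRent (hβ : ∀ s ∈ Icc (0:ℝ) 1, βe s ≠ ⊥)
    (hβm : MonotoneOn βe (Icc (0:ℝ) 1)) (hF : ContinuousOn (deriv F) (Icc 0 1))
    (hF0 : ∀ θ ∈ Icc (0:ℝ) 1, 0 ≤ deriv F θ) :
    Monotone fun y => meanType F * y - expectedCappedRent F βe y := by
  intro y y' hy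
  have h := intervalIntegral.integral_mono_on zero_le_one
    (intervalIntegrable_cappedRent_mul hβ hβm hF y')
    ((intervalIntegrable_cappedRent_mul hβ hβm hF y).add
      ((intervalIntegrable_mul_deriv hF).const_mul (y' - y))) fun θ hθ => by
    have := mul_le_mul_of_nonneg_right (cappedRent_le_add hβ hβm hθ hy) (hF0 θ hθ)
    linarith
  rw [intervalIntegral.integral_add (intervalIntegrable_cappedRent_mul hβ hβm hF y)
    ((intervalIntegrable_mul_deriv hF).const_mul (y' - y)),
    intervalIntegral.integral_const_mul] at h
  simp only [expectedCappedRent, meanType] at h ⊢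
  linarith

lemma integral_rent_mul_deriv (hβ : ∀ s ∈ Icc (0:ℝ) 1, βe s ≠ ⊥)
    (hβm : MonotoneOn βe (Icc (0:ℝ) 1)) (hF : ContinuousOn (deriv F) (Icc 0 1))
    {x y : ℝ} (hyx : y ≤ x) :
    ∫ θ in (0:ℝ)..1, rent βe x y θ * deriv F θ =
      expectedCappedRent F βe x + (meanType F * y - expectedCappedRent F βe y) := by
  rw [intervalIntegral.integral_congr (g := fun θ => cappedRent βe x θ * deriv F θ +
      y * (θ * deriv F θ) - cappedRent βe y θ * deriv F θ) fun θ hθ => by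
        rw [uIcc_of_le zero_le_one] at hθ
        simp only [rent_eq hβ hβm hθ hyx]
        ring,
    intervalIntegral.integral_sub ((intervalIntegrable_cappedRent_mul hβ hβm hF x).add
      ((intervalIntegrable_mul_deriv hF).const_mul y))
      (intervalIntegrable_cappedRent_mul hβ hβm hF y),
    intervalIntegral.integral_add (intervalIntegrable_cappedRent_mul hβ hβm hF x)
      ((intervalIntegrable_mul_deriv hF).const_mul y), intervalIntegral.integral_const_mul]
  simp only [expectedCappedRent, meanType]
  ring

end Rent

section Welfare

variable {F : ℝ → ℝ} {βe : ℝ → EReal} {n : ℕ} {μ₁ μ₂ : Measure ℝ} [IsProbabilityMeasure μ₁]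
  [IsProbabilityMeasure μ₂] {a b : ℝ}

lemma eqWelfare_eq (hβ : ∀ s ∈ Icc (0:ℝ) 1, βe s ≠ ⊥) (hβm : MonotoneOn βe (Icc (0:ℝ) 1))
    (hF : ContinuousOn (deriv F) (Icc 0 1)) (hF0 : ∀ θ ∈ Icc (0:ℝ) 1, 0 ≤ deriv F θ)
    (hn : 2 ≤ n) (h₁ : ∀ᵐ x ∂μ₁, x ∈ Icc a b) :
    eqWelfare F βe μ₁ n =
      (∫ v, expectedCappedRent F βe (Xstat v) ∂Measure.pi fun _ : Fin n => μ₁) +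
        ∫ v, meanType F * Ystat v - expectedCappedRent F βe (Ystat v)
          ∂Measure.pi fun _ : Fin n => μ₁ := by
  rw [eqWelfare, ← integral_add
    (integrable_comp_Xstat (by omega) h₁ (monotone_expectedCappedRent hβ hβm hF hF0))
    (integrable_comp_Ystat hn h₁ (monotone_meanType_mul_sub_expectedCappedRent hβ hβm hF hF0))]
  congr 1
  funext v
  exact integral_rent_mul_deriv hβ hβm hF (Ystat_le_Xstat hn v)

lemma integral_comp_Xstat_succ_le (hn : 2 ≤ n) (h₁ : ∀ᵐ x ∂μ₁, x ∈ Icc a b)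
    (h₂ : ∀ᵐ x ∂μ₂, x ∈ Icc a b) (hcdf : ∀ q, μ₁.real (Iic q) ^ (n - 1) = μ₂.real (Iic q) ^ n)
    {f : ℝ → ℝ} (hf : Monotone f) :
    ∫ v, f (Xstat v) ∂(Measure.pi fun _ : Fin (n + 1) => μ₂) ≤
      ∫ v, f (Xstat v) ∂(Measure.pi fun _ : Fin n => μ₁) := by
  refine integral_comp_le_of_forall_measureReal_preimage_Iic_le (measurable_Xstat (by omega))
    (measurable_Xstat (by omega)) (fun q => ?_) hf (integrable_comp_Xstat (by omega) h₁ hf)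
    (integrable_comp_Xstat (by omega) h₂ hf)
  rw [measureReal_Xstat_preimage_Iic _ (by omega), measureReal_Xstat_preimage_Iic _ (by omega)]
  exact pow_le_pow_succ_of_pow_pred_eq hn measureReal_nonneg measureReal_le_one (hcdf q)

lemma integral_comp_Ystat_succ_le (hn : 2 ≤ n) (h₁ : ∀ᵐ x ∂μ₁, x ∈ Icc a b)
    (h₂ : ∀ᵐ x ∂μ₂, x ∈ Icc a b) (hcdf : ∀ q, μ₁.real (Iic q) ^ (n - 1) = μ₂.real (Iic q) ^ n)
    {f : ℝ → ℝ} (hf : Monotone f) :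
    ∫ v, f (Ystat v) ∂(Measure.pi fun _ : Fin (n + 1) => μ₂) ≤
      ∫ v, f (Ystat v) ∂(Measure.pi fun _ : Fin n => μ₁) := by
  refine integral_comp_le_of_forall_measureReal_preimage_Iic_le (measurable_Ystat hn)
    (measurable_Ystat (by omega)) (fun q => ?_) hf (integrable_comp_Ystat hn h₁ hf)
    (integrable_comp_Ystat (by omega) h₂ hf)
  rw [measureReal_Ystat_preimage_Iic _ hn, measureReal_Ystat_preimage_Iic _ (by omega)]
  push_cast
  exact pow_add_mul_one_sub_le_of_pow_pred_eq hn measureReal_nonneg measureReal_nonneg (hcdf q)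

theorem eqWelfare_succ_le (hβ : ∀ s ∈ Icc (0:ℝ) 1, βe s ≠ ⊥)
    (hβm : MonotoneOn βe (Icc (0:ℝ) 1)) (hF : ContinuousOn (deriv F) (Icc 0 1))
    (hF0 : ∀ θ ∈ Icc (0:ℝ) 1, 0 ≤ deriv F θ) (hn : 2 ≤ n) (h₁ : ∀ᵐ x ∂μ₁, x ∈ Icc a b)
    (h₂ : ∀ᵐ x ∂μ₂, x ∈ Icc a b) (hcdf : ∀ q, μ₁.real (Iic q) ^ (n - 1) = μ₂.real (Iic q) ^ n) :
    eqWelfare F βe μ₂ (n + 1) ≤ eqWelfare F βe μ₁ n := by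
  rw [eqWelfare_eq hβ hβm hF hF0 hn h₁, eqWelfare_eq hβ hβm hF hF0 (by omega) h₂]
  exact add_le_add
    (integral_comp_Xstat_succ_le hn h₁ h₂ hcdf (monotone_expectedCappedRent hβ hβm hF hF0))
    (integral_comp_Ystat_succ_le hn h₁ h₂ hcdf
      (monotone_meanType_mul_sub_expectedCappedRent hβ hβm hF hF0))

end Welfare

section Model

variable {F g : ℝ → ℝ} {βe : ℝ → EReal}

lemma IsVSMax.ne_bot (hβ : IsVSMax F g βe) : ∀ s ∈ Icc (0:ℝ) 1, βe s ≠ ⊥ := by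
  intro s hs
  rcases le_or_gt 0 (phi F s) with h | h
  · simp [(hβ s hs).1 h]
  · obtain ⟨qb, hqb, -, -⟩ := (hβ s hs).2 h
    simp [hqb]

lemma IsVSMax.monotoneOn (hβ : IsVSMax F g βe) (hφ : StrictMonoOn (phi F) (Icc (0:ℝ) 1)) :
    MonotoneOn βe (Icc (0:ℝ) 1) := by
  intro s hs t ht hst
  rcases hst.eq_or_lt with rfl | hlt
  · exact le_rfl
  have hφst : phi F s < phi F t := hφ hs ht hlt
  rcases le_or_gt 0 (phi F t) with ht0 | ht0
  · simp [(hβ t ht).1 ht0]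
  obtain ⟨qs, hqs, hqs0, hmaxs⟩ := (hβ s hs).2 (hφst.trans ht0)
  obtain ⟨qt, hqt, hqt0, hmaxt⟩ := (hβ t ht).2 ht0
  rw [hqs, hqt, EReal.coe_le_coe_iff]
  -- adding the two optimality conditions gives `(φ t - φ s) (qt - qs) ≥ 0`
  nlinarith [hmaxs qt hqt0, hmaxt qs hqs0]

lemma measureReal_Iic_pow_pred_eq {μ : ℕ → Measure ℝ} {R : ℝ → ℝ} {qM : ℝ}
    (hcdf : ∀ k : ℕ, 2 ≤ k → ∀ q : ℝ, ((μ k) (Iic q)).toReal =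
      if q < 0 then 0 else if q ≤ qM then R q ^ (((k : ℝ) - 1)⁻¹) else 1)
    {n : ℕ} (hn : 2 ≤ n) (q : ℝ) :
    (μ n).real (Iic q) ^ (n - 1) = (μ (n + 1)).real (Iic q) ^ n := by
  -- at `k = 2` the formula reads `H_2 = R`, so `R q ≥ 0` and the real roots below are genuine
  have hR := hcdf 2 le_rfl q
  rw [measureReal_def, measureReal_def, hcdf n hn q, hcdf (n + 1) (by omega) q]
  split_ifs at hR ⊢ with hq hqM
  · rw [zero_pow (by omega), zero_pow (by omega)]
  · norm_num at hR
    have hR0 : 0 ≤ R q := hR ▸ ENNReal.toReal_nonneg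
    have hn1 : (n : ℝ) - 1 = ((n - 1 : ℕ) : ℝ) := by rw [Nat.cast_sub (by omega), Nat.cast_one]
    rw [hn1, Real.rpow_inv_natCast_pow hR0 (by omega), Nat.cast_add_one, add_sub_cancel_right,
      Real.rpow_inv_natCast_pow hR0 (by omega)]
  · simp

end Model

theorem stmt17_general (F g c : ℝ → ℝ) (hM : MainModel F g c)
    (βe : ℝ → EReal) (hβ : IsVSMax F g βe)
    (qM : ℝ)
    (μ : ℕ → Measure ℝ)
    (hμ : ∀ n : ℕ, 2 ≤ n → IsProbabilityMeasure (μ n) ∧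
      ∀ q : ℝ, ((μ n) (Iic q)).toReal =
        if q < 0 then 0
        else if q ≤ qM then (deriv c q / deriv (Vval F g) q) ^ (((n : ℝ) - 1)⁻¹)
        else 1) :
    ∀ n : ℕ, 2 ≤ n →
      eqWelfare F βe (μ (n + 1)) (n + 1) ≤ eqWelfare F βe (μ n) n := by
  intro n hn
  have hsupp : ∀ k, 2 ≤ k → ∀ᵐ x ∂μ k, x ∈ Icc (-1) (max qM 0 + 1) := by
    intro k hk
    have := (hμ k hk).1
    have hlo : ¬ max qM 0 + 1 < 0 := by linarith [le_max_right qM 0]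
    have hhi : ¬ max qM 0 + 1 ≤ qM := by linarith [le_max_left qM 0]
    exact ae_mem_Icc_of_measureReal_Iic (by simp [measureReal_def, (hμ k hk).2])
      (by simp only [measureReal_def, (hμ k hk).2, if_neg hlo, if_neg hhi])
  have := (hμ n hn).1
  have := (hμ (n + 1) (by omega)).1
  exact eqWelfare_succ_le hβ.ne_bot (hβ.monotoneOn hM.phi_mono)
    (hM.F_smooth.continuous_deriv (by norm_num)).continuousOn
    (fun θ hθ => (hM.F_density_pos θ hθ).le) hn (hsupp n hn) (hsupp (n + 1) (by omega))
    (measureReal_Iic_pow_pred_eq (fun k hk => (hμ k hk).2) hn)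

/-- welfare decreases in the number of active firms. With `μ n` the
equilibrium cap distribution `H_n(q) = (c'(q)/V'(q))^(1/(n-1))` on `[0, q^M]`, the
expected equilibrium welfare `W_n` satisfies `W_{n+1} ≤ W_n` for every `n ≥ 2`. -/
theorem stmt17 (F g c : ℝ → ℝ) (hM : MainModel F g c)
    (βe : ℝ → EReal) (hβ : IsVSMax F g βe)
    (qM : ℝ)
    (hqM : 0 ≤ qM ∧
      (∀ q : ℝ, 0 ≤ q → Vval F g q - c q ≤ Vval F g qM - c qM) ∧
      ∀ q : ℝ, 0 ≤ q →
        (∀ q' : ℝ, 0 ≤ q' → Vval F g q' - c q' ≤ Vval F g q - c q) → q = qM)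
    (μ : ℕ → Measure ℝ)
    (hμ : ∀ n : ℕ, 2 ≤ n → IsProbabilityMeasure (μ n) ∧
      ∀ q : ℝ, ((μ n) (Iic q)).toReal =
        if q < 0 then 0
        else if q ≤ qM then (deriv c q / deriv (Vval F g) q) ^ (((n : ℝ) - 1)⁻¹)
        else 1) :
    ∀ n : ℕ, 2 ≤ n →
      eqWelfare F βe (μ (n + 1)) (n + 1) ≤ eqWelfare F βe (μ n) n :=
  stmt17_general F g c hM βe hβ qM μ hμ
end
end

section
/- Assume linear preferences u(q,θ) = θq, θ uniformly distributed on [0,1], and cost c(q) = (q/a)^α with a > 0 and α > 1. Then V(q) = q/4, the monopolist cap is q^M = (a^α/(4α))^{1/(α−1)}, the symmetric duopoly equilibrium cap distribution is H(q) = min{4α q^{α−1}/a^α, 1}, monopoly welfare is W^M = q^M/8 + q^M/4 − c(q^M), and expected duopoly welfare is W₂ = E[X/8 + 3Y/8], where X and Y are the first- and second-order statistics of two i.i.d. draws from H. As α → ∞, the difference W₂ − W^M converges to a/8. -/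
/-!
The virtual value `2θ - 1` is nonnegative exactly on the upper half of types, so the best
monotone allocation below a cap `q` serves `q` to that half and earns `q / 4`. Writing
`t = q / q^M`, the monopoly profit is `q^M / (4α) * (α t - t ^ α)`, which Bernoulli's inequality
maximises uniquely at `t = 1`.

On `[0, q^M]` the equilibrium distribution is `H(q) = (q / q^M) ^ (α - 1)`, and `q^M → a`.
Expected duopoly welfare is at most `q^M / 2`, and by Markov's inequality on the event that both
caps exceed `t q^M` it is at least `t q^M / 2 * (1 - t ^ (α - 1)) ^ 2`, while monopoly welfare is
`3 q^M / 8 - q^M / (4α)`. Letting `α → ∞` and then `t → 1` squeezes the gap to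
`a / 2 - 3 a / 8 = a / 8`.
-/

open MeasureTheory Set Filter Topology Real

noncomputable section

/-- The maximal virtual surplus with linear preferences `u(q,θ) = θq` and uniform
types: `V(qcap)` is the supremum of `∫₀¹ (2θ - 1) q̃(θ) dθ` over nondecreasing
allocations bounded above by `qcap`. -/
def Vlin (qcap : ℝ) : ℝ :=
  sSup {v | ∃ q : ℝ → ℝ, Measurable q ∧ MonotoneOn q (Icc (0:ℝ) 1) ∧
    (∀ θ ∈ Icc (0:ℝ) 1, q θ ∈ Icc (0:ℝ) qcap) ∧
    v = ∫ θ in (0:ℝ)..1, (2 * θ - 1) * q θ}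

/-- The monopolist cap with cost `c(q) = (q/a)^α`. -/
def qMlin (a α : ℝ) : ℝ := (a ^ α / (4 * α)) ^ ((α - 1)⁻¹)

/-- The symmetric duopoly equilibrium cap distribution. -/
def Hlin (a α q : ℝ) : ℝ :=
  if q < 0 then 0 else min (4 * α * q ^ (α - 1) / a ^ α) 1

def upperHalfAllocation (q θ : ℝ) : ℝ := if θ < 2⁻¹ then 0 else q

lemma monotone_upperHalfAllocation {q : ℝ} (hq : 0 ≤ q) : Monotone (upperHalfAllocation q) := by
  intro x y hxy
  unfold upperHalfAllocation
  split_ifs <;> linarith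

lemma mul_le_mul_upperHalfAllocation {q θ v : ℝ} (hv : v ∈ Icc 0 q) :
    (2 * θ - 1) * v ≤ (2 * θ - 1) * upperHalfAllocation q θ := by
  unfold upperHalfAllocation
  split_ifs
  · nlinarith [hv.1]
  · nlinarith [hv.2]

lemma integral_mul_upperHalfAllocation {q : ℝ} (hq : 0 ≤ q) :
    ∫ θ in (0:ℝ)..1, (2 * θ - 1) * upperHalfAllocation q θ = q / 4 := by
  have hint (a b : ℝ) :
      IntervalIntegrable (fun θ => (2 * θ - 1) * upperHalfAllocation q θ) volume a b :=
    (monotone_upperHalfAllocation hq).monotoneOn _ |>.intervalIntegrable.continuousOn_mul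
      (by fun_prop)
  have hlow : ∫ θ in (0:ℝ)..2⁻¹, (2 * θ - 1) * upperHalfAllocation q θ = 0 := by
    rw [intervalIntegral.integral_congr (g := fun _ => 0), intervalIntegral.integral_zero]
    intro θ hθ
    rw [uIcc_of_le (by norm_num)] at hθ
    rcases hθ.2.lt_or_eq with h | rfl
    · simp [upperHalfAllocation, h]
    · norm_num
  have hhigh : ∫ θ in (2⁻¹ : ℝ)..1, (2 * θ - 1) * upperHalfAllocation q θ = q / 4 := by
    rw [intervalIntegral.integral_congr (g := fun θ => (2 * θ - 1) * q)]
    · rw [intervalIntegral.integral_mul_const, intervalIntegral.integral_sub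
        (intervalIntegral.intervalIntegrable_id.const_mul 2) intervalIntegrable_const,
        intervalIntegral.integral_const_mul]
      simp
      ring
    intro θ hθ
    rw [uIcc_of_le (by norm_num)] at hθ
    simp [upperHalfAllocation, hθ.1]
  rw [← intervalIntegral.integral_add_adjacent_intervals (hint 0 2⁻¹) (hint _ 1), hlow,
    hhigh, zero_add]

theorem Vlin_eq {q : ℝ} (hq : 0 ≤ q) : Vlin q = q / 4 := by
  have hmono := monotone_upperHalfAllocation hq
  refine IsGreatest.csSup_eq ⟨⟨upperHalfAllocation q, hmono.measurable, hmono.monotoneOn _,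
    fun θ _ => ?_, (integral_mul_upperHalfAllocation hq).symm⟩, ?_⟩
  · unfold upperHalfAllocation
    split_ifs <;> simp [hq]
  rintro v ⟨f, -, hf_mono, hf_mem, rfl⟩
  rw [← integral_mul_upperHalfAllocation hq]
  refine intervalIntegral.integral_mono_on zero_le_one ?_ ?_
    fun θ hθ => mul_le_mul_upperHalfAllocation (hf_mem θ hθ)
  · rw [← uIcc_of_le zero_le_one] at hf_mono
    exact hf_mono.intervalIntegrable.continuousOn_mul (by fun_prop)
  · exact (hmono.monotoneOn _).intervalIntegrable.continuousOn_mul (by fun_prop)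

lemma mul_sub_rpow_lt_sub_one {t α : ℝ} (ht : 0 ≤ t) (ht1 : t ≠ 1) (hα : 1 < α) :
    α * t - t ^ α < α - 1 := by
  have := one_add_mul_self_lt_rpow_one_add (s := t - 1) (by linarith) (sub_ne_zero.2 ht1) hα
  rw [add_sub_cancel] at this
  linarith

section qMlin

variable {a α : ℝ} (ha : 0 < a) (hα : 1 < α)
include ha hα

lemma qMlin_pos : 0 < qMlin a α := by
  unfold qMlin
  have : 0 < α := by linarith
  positivity

lemma qMlin_rpow_sub_one : qMlin a α ^ (α - 1) = a ^ α / (4 * α) :=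
  rpow_inv_rpow (div_pos (rpow_pos_of_pos ha α) (by linarith)).le (by linarith)

lemma div_qMlin_rpow {q : ℝ} (hq : 0 ≤ q) :
    (q / qMlin a α) ^ (α - 1) = 4 * α * q ^ (α - 1) / a ^ α := by
  have : 0 < α := by linarith
  rw [div_rpow hq (qMlin_pos ha hα).le, qMlin_rpow_sub_one ha hα]
  field_simp

lemma qMlin_cost : (qMlin a α / a) ^ α = qMlin a α / (4 * α) := by
  have hM := qMlin_pos ha hα
  have h := qMlin_rpow_sub_one ha hα
  rw [rpow_sub_one hM.ne'] at h
  rw [div_rpow hM.le ha.le, div_eq_iff (rpow_pos_of_pos ha α).ne']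
  field_simp at h ⊢
  linarith

lemma profit_lt_profit_qMlin {q : ℝ} (hq : 0 ≤ q) (hne : q ≠ qMlin a α) :
    q / 4 - (q / a) ^ α < qMlin a α / 4 - (qMlin a α / a) ^ α := by
  have hM := qMlin_pos ha hα
  have ht : q / qMlin a α ≠ 1 := by rwa [Ne, div_eq_one_iff_eq hM.ne']
  have key := mul_sub_rpow_lt_sub_one (div_nonneg hq hM.le) ht hα
  have hcost : (q / a) ^ α = (q / qMlin a α) ^ α * (qMlin a α / (4 * α)) := by
    rw [← qMlin_cost ha hα, ← mul_rpow (div_nonneg hq hM.le) (div_nonneg hM.le ha.le),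
      div_mul_div_cancel₀ hM.ne']
  have : 0 < α := by linarith
  calc q / 4 - (q / a) ^ α
      = qMlin a α / (4 * α) * (α * (q / qMlin a α) - (q / qMlin a α) ^ α) := by
        rw [hcost]; field_simp
    _ < qMlin a α / (4 * α) * (α - 1) := mul_lt_mul_of_pos_left key (by positivity)
    _ = qMlin a α / 4 - (qMlin a α / a) ^ α := by
        rw [qMlin_cost ha hα]; field_simp

end qMlin

lemma deriv_Vlin {q : ℝ} (hq : 0 < q) : deriv Vlin q = 1 / 4 := by
  have : Vlin =ᶠ[𝓝 q] fun x => x / 4 :=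
    eventually_gt_nhds hq |>.mono fun x hx => Vlin_eq hx.le
  rw [this.deriv_eq]
  exact ((hasDerivAt_id q).div_const 4).deriv

lemma Hlin_eq_min_deriv {a α q : ℝ} (ha : 0 < a) (hq : 0 < q) :
    Hlin a α q = min (deriv (fun z => (z / a) ^ α) q / deriv Vlin q) 1 := by
  have hcost : deriv (fun z => (z / a) ^ α) q = 1 / a * α * (q / a) ^ (α - 1) :=
    (((hasDerivAt_id' q).div_const a).rpow_const (Or.inl (div_pos hq ha).ne')).deriv
  rw [hcost, deriv_Vlin hq, Hlin, if_neg hq.not_gt, div_rpow hq.le ha.le, rpow_sub_one ha.ne']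
  field_simp

lemma tendsto_qMlin_atTop {a : ℝ} (ha : 0 < a) : Tendsto (qMlin a) atTop (𝓝 a) := by
  have hexp : Tendsto (fun α : ℝ => 1 + (α - 1)⁻¹) atTop (𝓝 1) := by
    simpa [sub_eq_add_neg] using (tendsto_inv_atTop_zero.comp
      (tendsto_atTop_add_const_right _ (-1 : ℝ) tendsto_id)).const_add 1
  have hnum : Tendsto (fun α : ℝ => a ^ (1 + (α - 1)⁻¹)) atTop (𝓝 a) := by
    simpa using tendsto_const_nhds.rpow hexp (Or.inl ha.ne')
  have hden : Tendsto (fun α : ℝ => (4 * α) ^ (α - 1)⁻¹) atTop (𝓝 1) := by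
    refine ((tendsto_rpow_div_mul_add 4 1 (-4) one_ne_zero.symm).comp
      (tendsto_id.const_mul_atTop four_pos)).congr fun α => ?_
    simp only [Function.comp_apply, id]
    rw [show 1 * (4 * α) + -4 = 4 * (α - 1) by ring, div_mul_cancel_left₀ four_ne_zero]
  have hlim := hnum.div hden one_ne_zero
  rw [div_one] at hlim
  refine hlim.congr' ?_
  filter_upwards [eventually_gt_atTop 1] with α hα
  have : α - 1 ≠ 0 := by linarith
  rw [Pi.div_apply, qMlin, div_rpow (by positivity) (by positivity), ← rpow_mul ha.le]
  congr 2
  field_simp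
  ring

def duopolyWelfare (p : ℝ × ℝ) : ℝ := max p.1 p.2 / 8 + 3 * min p.1 p.2 / 8

lemma continuous_duopolyWelfare : Continuous duopolyWelfare := by
  unfold duopolyWelfare
  fun_prop

lemma duopolyWelfare_mem_Icc {x y M : ℝ} (hx : x ∈ Icc 0 M) (hy : y ∈ Icc 0 M) :
    duopolyWelfare (x, y) ∈ Icc 0 (M / 2) := by
  have := min_le_max (a := x) (b := y)
  constructor
  · have := le_min hx.1 hy.1
    unfold duopolyWelfare
    linarith
  · have := max_le hx.2 hy.2
    unfold duopolyWelfare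
    linarith

lemma half_lt_duopolyWelfare {x y s : ℝ} (hx : s < x) (hy : s < y) :
    s / 2 < duopolyWelfare (x, y) := by
  have := lt_min hx hy
  have := min_le_max (a := x) (b := y)
  unfold duopolyWelfare
  linarith

lemma ae_duopolyWelfare_mem_Icc {μ : Measure ℝ} [SFinite μ] {M : ℝ}
    (hμ : ∀ᵐ x ∂μ, x ∈ Icc 0 M) : ∀ᵐ p ∂μ.prod μ, duopolyWelfare p ∈ Icc 0 (M / 2) := by
  filter_upwards [Measure.quasiMeasurePreserving_fst.ae hμ,
    Measure.quasiMeasurePreserving_snd.ae hμ]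
    with p hx hy using duopolyWelfare_mem_Icc hx hy

section support

variable {μ : Measure ℝ} [IsProbabilityMeasure μ] {M : ℝ} (hμ : ∀ᵐ x ∂μ, x ∈ Icc 0 M)
include hμ

lemma integrable_duopolyWelfare : Integrable duopolyWelfare (μ.prod μ) := by
  refine .of_bound continuous_duopolyWelfare.aestronglyMeasurable (M / 2) ?_
  filter_upwards [ae_duopolyWelfare_mem_Icc hμ] with p hp
  rw [norm_of_nonneg hp.1]
  exact hp.2

lemma integral_duopolyWelfare_le : ∫ p, duopolyWelfare p ∂μ.prod μ ≤ M / 2 := by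
  refine (integral_mono_ae (integrable_duopolyWelfare hμ) (integrable_const (M / 2)) ?_).trans ?_
  · filter_upwards [ae_duopolyWelfare_mem_Icc hμ] with p hp using hp.2
  · simp

lemma le_integral_duopolyWelfare {s : ℝ} (hs : 0 ≤ s) :
    s / 2 * μ.real (Ioi s) ^ 2 ≤ ∫ p, duopolyWelfare p ∂μ.prod μ := by
  have hevent : Ioi s ×ˢ Ioi s ⊆ {p | s / 2 ≤ duopolyWelfare p} :=
    fun p hp => (half_lt_duopolyWelfare hp.1 hp.2).le
  calc s / 2 * μ.real (Ioi s) ^ 2 = s / 2 * (μ.prod μ).real (Ioi s ×ˢ Ioi s) := by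
        rw [measureReal_prod_prod, sq]
    _ ≤ s / 2 * (μ.prod μ).real {p | s / 2 ≤ duopolyWelfare p} :=
        mul_le_mul_of_nonneg_left (measureReal_mono hevent) (by positivity)
    _ ≤ ∫ p, duopolyWelfare p ∂μ.prod μ :=
        mul_meas_ge_le_integral_of_nonneg
          ((ae_duopolyWelfare_mem_Icc hμ).mono fun _ hp => hp.1)
          (integrable_duopolyWelfare hμ) _

end support

section equilibrium

variable {a α : ℝ} (ha : 0 < a) (hα : 1 < α)
include ha hα

lemma Hlin_of_nonneg {q : ℝ} (hq : 0 ≤ q) : Hlin a α q = min ((q / qMlin a α) ^ (α - 1)) 1 := by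
  rw [Hlin, if_neg hq.not_gt, div_qMlin_rpow ha hα hq]

variable {μ : Measure ℝ} [IsProbabilityMeasure μ] (hH : ∀ q, μ.real (Iic q) = Hlin a α q)
include hH

lemma ae_mem_Icc_qMlin : ∀ᵐ x ∂μ, x ∈ Icc 0 (qMlin a α) := by
  have hM := qMlin_pos ha hα
  have hneg : μ (Iic 0) = 0 := by
    rw [← measureReal_eq_zero_iff, hH, Hlin_of_nonneg ha hα le_rfl, zero_div,
      zero_rpow (by linarith), min_eq_left zero_le_one]
  have hbig : μ (Ioi (qMlin a α)) = 0 := by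
    rw [← measureReal_eq_zero_iff, ← compl_Iic, probReal_compl_eq_one_sub measurableSet_Iic, hH,
      Hlin_of_nonneg ha hα hM.le, div_self hM.ne', one_rpow, min_self, sub_self]
  filter_upwards [measure_eq_zero_iff_ae_notMem.1 hneg, measure_eq_zero_iff_ae_notMem.1 hbig]
    with x hx hx'
  exact ⟨(not_le.1 hx).le, not_lt.1 hx'⟩

lemma measureReal_Ioi_mul_qMlin {t : ℝ} (ht : t ∈ Icc 0 1) :
    μ.real (Ioi (t * qMlin a α)) = 1 - t ^ (α - 1) := by
  have hM := qMlin_pos ha hα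
  rw [← compl_Iic, probReal_compl_eq_one_sub measurableSet_Iic, hH,
    Hlin_of_nonneg ha hα (mul_nonneg ht.1 hM.le), mul_div_cancel_right₀ _ hM.ne',
    min_eq_left (rpow_le_one ht.1 ht.2 (by linarith))]

lemma integral_duopolyWelfare_bounds {t : ℝ} (ht : t ∈ Icc 0 1) :
    t * qMlin a α / 2 * (1 - t ^ (α - 1)) ^ 2 ≤ ∫ p, duopolyWelfare p ∂μ.prod μ ∧
      ∫ p, duopolyWelfare p ∂μ.prod μ ≤ qMlin a α / 2 := by
  have hsupp := ae_mem_Icc_qMlin ha hα hH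
  refine ⟨?_, integral_duopolyWelfare_le hsupp⟩
  have := le_integral_duopolyWelfare hsupp (mul_nonneg ht.1 (qMlin_pos ha hα).le)
  rwa [measureReal_Ioi_mul_qMlin ha hα hH ht] at this

end equilibrium

theorem tendsto_welfare_gap {a : ℝ} (ha : 0 < a) (μ : ℝ → Measure ℝ)
    (hμ : ∀ α : ℝ, 1 < α → IsProbabilityMeasure (μ α) ∧
      ∀ q : ℝ, (μ α).real (Iic q) = Hlin a α q) :
    Tendsto (fun α : ℝ => (∫ p, duopolyWelfare p ∂(μ α).prod (μ α)) -
      (qMlin a α / 8 + qMlin a α / 4 - (qMlin a α / a) ^ α)) atTop (𝓝 (a / 8)) := by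
  have hM := tendsto_qMlin_atTop ha
  have hbounds {α t : ℝ} (hα : 1 < α) (ht : t ∈ Icc 0 1) :
      t * qMlin a α / 2 * (1 - t ^ (α - 1)) ^ 2 ≤ ∫ p, duopolyWelfare p ∂(μ α).prod (μ α) ∧
        ∫ p, duopolyWelfare p ∂(μ α).prod (μ α) ≤ qMlin a α / 2 :=
    have := (hμ α hα).1
    integral_duopolyWelfare_bounds ha hα (hμ α hα).2 ht
  rw [tendsto_order]
  constructor
  · intro b hb
    obtain ⟨t, ht, ht1⟩ := exists_between (max_lt zero_lt_one
      ((div_lt_one ha).2 (by linarith : 2 * b + 3 * a / 4 < a)))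
    rw [max_lt_iff, div_lt_iff₀ ha] at ht
    have hpow : Tendsto (fun α : ℝ => t ^ (α - 1)) atTop (𝓝 0) :=
      (tendsto_rpow_atTop_of_base_lt_one t (by linarith) ht1).comp
        (tendsto_atTop_add_const_right _ (-1) tendsto_id)
    have hlow : Tendsto (fun α => t * qMlin a α / 2 * (1 - t ^ (α - 1)) ^ 2 - 3 * qMlin a α / 8)
        atTop (𝓝 (t * a / 2 * (1 - 0) ^ 2 - 3 * a / 8)) :=
      (((hM.const_mul t).div_const 2).mul ((tendsto_const_nhds.sub hpow).pow 2)).sub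
        ((hM.const_mul 3).div_const 8)
    filter_upwards [hlow.eventually_const_lt (u := b) (by linarith), eventually_gt_atTop 1]
      with α hlt hα
    have hW := (hbounds hα ⟨ht.1.le, ht1.le⟩).1
    have hcost := qMlin_cost ha hα
    have hcost_pos : 0 < qMlin a α / (4 * α) := div_pos (qMlin_pos ha hα) (by linarith)
    linarith
  · intro b hb
    have hup : Tendsto (fun α => qMlin a α / 8 + qMlin a α / (4 * α)) atTop (𝓝 (a / 8 + 0)) :=
      (hM.div_const 8).add (hM.div_atTop (tendsto_id.const_mul_atTop four_pos))
    filter_upwards [hup.eventually_lt_const (u := b) (by linarith), eventually_gt_atTop 1]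
      with α hlt hα
    have hW := (hbounds hα ⟨zero_le_one, le_rfl⟩).2
    have hcost := qMlin_cost ha hα
    linarith

/-- linear-uniform example. With `u(q,θ) = θq`, uniform types and
`c(q) = (q/a)^α`: `V(q) = q/4`; the monopolist cap is `q^M = (a^α/(4α))^{1/(α-1)}`;
the symmetric duopoly cap distribution is `H(q) = min{4αq^{α-1}/a^α, 1}` (i.e. equals
`min{c'(q)/V'(q), 1}`); and, with monopoly welfare `W^M = q^M/8 + q^M/4 - c(q^M)` and
expected duopoly welfare `W₂ = E[X/8 + 3Y/8]` for `X, Y` the order statistics of two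
i.i.d. draws from `H`, the difference `W₂ - W^M` converges to `a/8` as `α → ∞`. -/
theorem stmt19 (a : ℝ) (ha : 0 < a)
    (μ : ℝ → Measure ℝ)
    (hμ : ∀ α : ℝ, 1 < α → IsProbabilityMeasure (μ α) ∧
      ∀ q : ℝ, ((μ α) (Iic q)).toReal = Hlin a α q) :
    (∀ q : ℝ, 0 ≤ q → Vlin q = q / 4) ∧
    (∀ α : ℝ, 1 < α →
      (∀ q : ℝ, 0 ≤ q →
        Vlin q - (q / a) ^ α ≤ Vlin (qMlin a α) - (qMlin a α / a) ^ α) ∧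
      ∀ q : ℝ, 0 ≤ q →
        (∀ q' : ℝ, 0 ≤ q' → Vlin q' - (q' / a) ^ α ≤ Vlin q - (q / a) ^ α) →
        q = qMlin a α) ∧
    (∀ α : ℝ, 1 < α → ∀ q : ℝ, 0 < q → q ≤ qMlin a α →
      Hlin a α q = min (deriv (fun z => (z / a) ^ α) q / deriv Vlin q) 1) ∧
    Tendsto
      (fun α : ℝ =>
        (∫ p : ℝ × ℝ, (max p.1 p.2 / 8 + 3 * min p.1 p.2 / 8)
            ∂((μ α).prod (μ α))) -
          (qMlin a α / 8 + qMlin a α / 4 - (qMlin a α / a) ^ α))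
      atTop (nhds (a / 8)) := by
  refine ⟨fun q hq => Vlin_eq hq, fun α hα => ?_, fun α _ q hq _ => Hlin_eq_min_deriv ha hq,
    tendsto_welfare_gap ha μ hμ⟩
  have hM := (qMlin_pos ha hα).le
  refine ⟨fun q hq => ?_, fun q hq hmax => ?_⟩
  · rw [Vlin_eq hq, Vlin_eq hM]
    rcases eq_or_ne q (qMlin a α) with rfl | hne
    · exact le_rfl
    · exact (profit_lt_profit_qMlin ha hα hq hne).le
  · by_contra hne
    have hle := hmax _ hM
    rw [Vlin_eq hq, Vlin_eq hM] at hle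
    exact hle.not_gt (profit_lt_profit_qMlin ha hα hq hne)
end
end
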